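/- arXiv:2407.11565 — 4 statements merged into one kernel-verified Lean document; each statement's English description precedes it below -/
import Mathlib

section
/- Let {g_i}_{i∈𝓘_N} be a normalized LF system (d_i = 1) with associated quantities α, β, G_i, H_i. Then: (i) a_0 ≤ 1 and b_{N−1} + c_{N−1} ≥ 0; (ii) β = +∞ if and only if a_0 = 1, and α = −1 if and only if b_{N−1} + c_{N−1} = 0 (so: a_0 = 1 and b_{N−1}+c_{N−1} = 0 gives α = −1, β = +∞; a_0 = 1 and b_{N−1}+c_{N−1} > 0 gives α > −1, β = +∞; a_0 < 1 and b_{N−1}+c_{N−1} = 0 gives α = −1, β < +∞; a_0 < 1 and b_{N−1}+c_{N−1} > 0 gives α > −1, β < +∞); (iii) if a_0 = 1, then H_0(y) = y + c_0 has no fixed point in Y∩ℝ, its fixed point in [−1,+∞] is +∞, and 𝔭_0 = (1,0,…,0); (iv) if b_{N−1} + c_{N−1} = 0, then the fixed point of H_{N−1} in Y is −1 and 𝔭_{N−1} = (0,…,0,1). -/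
open Set Filter Topology

/-- A normalized LF system (`d i = 1`): `g i x = (a i * x + b i)/(c i * x + 1)` with
`c i + 1 > 0`, `0 < a i − b i c i ≤ min 1 (c i + 1)²`, `b 0 = 0`,
`(a i + b i)/(c i + 1) = b (i+1)` for `i + 1 < N`, and
`(a (N-1) + b (N-1))/(c (N-1) + 1) = 1`. -/
def NormLFSystem (N : ℕ) (a b c : ℕ → ℝ) : Prop :=
  (∀ i < N, 0 < c i + 1) ∧
  (∀ i < N, 0 < a i - b i * c i ∧ a i - b i * c i ≤ min 1 ((c i + 1) ^ 2)) ∧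
  b 0 = 0 ∧
  (∀ i, i + 1 < N → (a i + b i) / (c i + 1) = b (i + 1)) ∧
  (a (N - 1) + b (N - 1)) / (c (N - 1) + 1) = 1

/-- `G i (y) = (a i − b i c i)(y+1) / ((b i y + 1)((a i + b i) y + (c i + 1)))`. -/
noncomputable def GLF (a b c : ℕ → ℝ) (i : ℕ) (y : ℝ) : ℝ :=
  (a i - b i * c i) * (y + 1) / ((b i * y + 1) * ((a i + b i) * y + (c i + 1)))

/-- `H i (y) = (a i y + c i) / (b i y + 1)`. -/
noncomputable def HLF (a b c : ℕ → ℝ) (i : ℕ) (y : ℝ) : ℝ :=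
  (a i * y + c i) / (b i * y + 1)

/-- The (finite) fixed point of `H i`: `c 0 / (1 − a 0)` for `i = 0`, and
`(a i − 1 + √((1 − a i)² + 4 b i c i)) / (2 b i)` for `i ≥ 1`. -/
noncomputable def fixPt (a b c : ℕ → ℝ) (i : ℕ) : ℝ :=
  if i = 0 then c 0 / (1 - a 0)
  else (a i - 1 + Real.sqrt ((1 - a i) ^ 2 + 4 * b i * c i)) / (2 * b i)

/-- `α := min{0, c 0/(1 − a 0) (omitted if a 0 = 1), fixPt i (1 ≤ i ≤ N−1)}`. -/
noncomputable def alphaLF (N : ℕ) (a b c : ℕ → ℝ) : ℝ :=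
  sInf ({0} ∪ (if a 0 = 1 then (∅ : Set ℝ) else {c 0 / (1 - a 0)}) ∪
    {x | ∃ i, 1 ≤ i ∧ i < N ∧ x = fixPt a b c i})

/-- `β ∈ [−1, +∞]`: the maximum of the same collection, with the convention
`c 0/(1 − a 0) := +∞` when `a 0 = 1`. -/
noncomputable def betaLF (N : ℕ) (a b c : ℕ → ℝ) : EReal :=
  sSup ({(0 : EReal)} ∪
    (if a 0 = 1 then {(⊤ : EReal)} else {((c 0 / (1 - a 0) : ℝ) : EReal)}) ∪
    {x | ∃ i, 1 ≤ i ∧ i < N ∧ x = ((fixPt a b c i : ℝ) : EReal)})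

/-- The probability vector `𝔭 i = (G 0 (y_i), …, G (N−1) (y_i))`, where `y_i` is the
fixed point of `H i`, with the limit conventions at the degenerate fixed points:
`𝔭 0 := (1,0,…,0)` when the fixed point of `H 0` is `+∞` (i.e. `a 0 = 1`), and
`𝔭 i := (0,…,0,1)` when the fixed point is `−1` (the limit values of `G k`). -/
noncomputable def pVec (N : ℕ) (a b c : ℕ → ℝ) (i : ℕ) : ℕ → ℝ :=
  if i = 0 ∧ a 0 = 1 then fun k => if k = 0 then 1 else 0
  else if fixPt a b c i = -1 then fun k => if k = N - 1 then 1 else 0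
  else fun k => GLF a b c k (fixPt a b c i)

lemma lf_b_pos (N : ℕ) (a b c : ℕ → ℝ) (h : NormLFSystem N a b c) :
    ∀ i, i < N → 0 ≤ b i ∧ (1 ≤ i → 0 < b i) := by
  obtain ⟨hc, hab, hb0, hrec, hlast⟩ := h
  intro i
  induction i with
  | zero => intro _; simp [hb0]
  | succ n ih =>
    intro hn
    have hnN : n < N := by omega
    have hbn := (ih hnN).1
    have hcn := hc n hnN
    have habn := (hab n hnN).1
    have hpos : 0 < a n + b n := by nlinarith [mul_nonneg hbn hcn.le]
    have : 0 < b (n + 1) := by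
      rw [← hrec n hn]; exact div_pos hpos hcn
    exact ⟨this.le, fun _ => this⟩

lemma lf_back_aux (N : ℕ) (hN : 2 ≤ N) (a b c : ℕ → ℝ) (h : NormLFSystem N a b c) :
    ∀ j i, i < N → i + j = N - 1 →
      (a i + b i ≤ c i + 1 ∧ b i < 1 ∧ (0 < j → a i + b i < c i + 1)) := by
  obtain ⟨hc, hab, hb0, hrec, hlast⟩ := h
  intro j
  induction j with
  | zero =>
    intro i hiN hij
    have hi : i = N - 1 := by omega
    subst hi
    have hcp := hc _ hiN
    have heq : a (N-1) + b (N-1) = c (N-1) + 1 := by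
      rw [div_eq_one_iff_eq (ne_of_gt hcp)] at hlast; exact hlast
    have habp := (hab _ hiN).1
    refine ⟨heq.le, ?_, by omega⟩
    nlinarith
  | succ j ih =>
    intro i hiN hij
    have hi1 : i + 1 < N := by omega
    have ih1 := ih (i+1) hi1 (by omega)
    have hcp := hc i (by omega)
    have heq : a i + b i = b (i+1) * (c i + 1) := by
      rw [← hrec i hi1]; field_simp
    have hlt : a i + b i < c i + 1 := by nlinarith [ih1.2.1]
    have habp := (hab i (by omega)).1
    refine ⟨hlt.le, ?_, fun _ => hlt⟩
    nlinarith

lemma lf_back (N : ℕ) (hN : 2 ≤ N) (a b c : ℕ → ℝ) (h : NormLFSystem N a b c) :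
    ∀ i, i < N → (a i + b i ≤ c i + 1 ∧ b i < 1 ∧ (i < N - 1 → a i + b i < c i + 1)) := by
  intro i hiN
  have := lf_back_aux N hN a b c h (N - 1 - i) i hiN (by omega)
  exact ⟨this.1, this.2.1, fun hi => this.2.2 (by omega)⟩

lemma lf_bc_nonneg (N : ℕ) (hN : 2 ≤ N) (a b c : ℕ → ℝ) (h : NormLFSystem N a b c) :
    0 ≤ b (N - 1) + c (N - 1) := by
  obtain ⟨hc, hab, hb0, hrec, hlast⟩ := h
  have hiN : N - 1 < N := by omega
  have hcp := hc _ hiN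
  have heq : a (N-1) + b (N-1) = c (N-1) + 1 := by
    rw [div_eq_one_iff_eq (ne_of_gt hcp)] at hlast; exact hlast
  have h2 : a (N-1) - b (N-1) * c (N-1) ≤ (c (N-1) + 1)^2 :=
    le_trans (hab _ hiN).2 (min_le_right _ _)
  nlinarith
lemma lf_fix_ge (N : ℕ) (hN : 2 ≤ N) (a b c : ℕ → ℝ) (h : NormLFSystem N a b c) :
    ∀ i, 1 ≤ i → i < N → -1 ≤ fixPt a b c i := by
  intro i h1 h2
  have hb : 0 < b i := (lf_b_pos N a b c h i h2).2 h1
  have hcb : a i + b i ≤ c i + 1 := (lf_back N hN a b c h i h2).1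
  have hD : (1 - a i - 2*b i)^2 ≤ (1 - a i)^2 + 4 * b i * c i := by
    nlinarith [mul_nonneg hb.le (by linarith : (0:ℝ) ≤ c i + 1 - (a i + b i))]
  have hs : 1 - a i - 2*b i ≤ Real.sqrt ((1 - a i)^2 + 4 * b i * c i) :=
    le_trans (le_abs_self _) (by
      rw [← Real.sqrt_sq_eq_abs]; exact Real.sqrt_le_sqrt hD)
  rw [fixPt, if_neg (by omega : i ≠ 0), le_div_iff₀ (by positivity)]
  linarith

lemma lf_fix_eq (N : ℕ) (hN : 2 ≤ N) (a b c : ℕ → ℝ) (h : NormLFSystem N a b c) :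
    ∀ i, 1 ≤ i → i < N → fixPt a b c i = -1 →
      i = N - 1 ∧ b (N - 1) + c (N - 1) = 0 := by
  intro i h1 h2 heq
  have hb : 0 < b i := (lf_b_pos N a b c h i h2).2 h1
  have hcb : a i + b i ≤ c i + 1 := (lf_back N hN a b c h i h2).1
  have hD : (1 - a i - 2*b i)^2 ≤ (1 - a i)^2 + 4 * b i * c i := by
    nlinarith [mul_nonneg hb.le (by linarith : (0:ℝ) ≤ c i + 1 - (a i + b i))]
  rw [fixPt, if_neg (by omega : i ≠ 0), div_eq_iff (by positivity : (2:ℝ) * b i ≠ 0)] at heq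
  have hsv : Real.sqrt ((1 - a i)^2 + 4 * b i * c i) = 1 - a i - 2 * b i := by linarith
  have hnn : 0 ≤ 1 - a i - 2 * b i := hsv ▸ Real.sqrt_nonneg _
  have hDnn : 0 ≤ (1 - a i)^2 + 4 * b i * c i := le_trans (sq_nonneg _) hD
  have hDval : (1 - a i)^2 + 4 * b i * c i = (1 - a i - 2*b i)^2 := by
    rw [← Real.sq_sqrt hDnn, hsv]
  have hz : b i * (c i + 1 - a i - b i) = 0 := by linear_combination hDval / 4
  have hce : c i + 1 - a i - b i = 0 := by
    rcases mul_eq_zero.1 hz with h' | h'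
    · exact absurd h' (ne_of_gt hb)
    · exact h'
  have hiN : i = N - 1 := by
    by_contra h'
    have := (lf_back N hN a b c h i h2).2.2 (by omega)
    linarith
  subst hiN
  refine ⟨rfl, le_antisymm (by linarith) (lf_bc_nonneg N hN a b c h)⟩

lemma lf_fix_neg_one (N : ℕ) (hN : 2 ≤ N) (a b c : ℕ → ℝ) (h : NormLFSystem N a b c)
    (hbc : b (N - 1) + c (N - 1) = 0) : fixPt a b c (N - 1) = -1 := by
  obtain ⟨hc, hab, hb0, hrec, hlast⟩ := h
  have hiN : N - 1 < N := by omega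
  have hcp := hc _ hiN
  have heq : a (N-1) + b (N-1) = c (N-1) + 1 := by
    rw [div_eq_one_iff_eq (ne_of_gt hcp)] at hlast; exact hlast
  have hb : 0 < b (N-1) :=
    (lf_b_pos N a b c ⟨hc, hab, hb0, hrec, by rw [div_eq_one_iff_eq (ne_of_gt hcp)]; exact heq⟩
      (N-1) hiN).2 (by omega)
  have hA : a (N-1) = 1 - 2 * b (N-1) := by linarith
  have hC : c (N-1) = - b (N-1) := by linarith
  have hD0 : (1 - a (N-1))^2 + 4 * b (N-1) * c (N-1) = 0 := by
    rw [hA, hC]; ring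
  rw [fixPt, if_neg (by omega : N - 1 ≠ 0), hD0, Real.sqrt_zero,
    div_eq_iff (by positivity : (2:ℝ) * b (N-1) ≠ 0)]
  linarith

lemma lf_a0_le_one (N : ℕ) (hN : 2 ≤ N) (a b c : ℕ → ℝ) (h : NormLFSystem N a b c) :
    a 0 ≤ 1 := by
  obtain ⟨hc, hab, hb0, hrec, hlast⟩ := h
  have h1 : a 0 - b 0 * c 0 ≤ 1 := le_trans (hab 0 (by omega)).2 (min_le_left _ _)
  rw [hb0] at h1; linarith

lemma lf_c0_pos (N : ℕ) (hN : 2 ≤ N) (a b c : ℕ → ℝ) (h : NormLFSystem N a b c)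
    (ha0 : a 0 = 1) : 0 < c 0 := by
  have hb1 : b 1 < 1 := (lf_back N hN a b c h 1 (by omega)).2.1
  obtain ⟨hc, hab, hb0, hrec, hlast⟩ := h
  have hcp := hc 0 (by omega)
  have := hrec 0 (by omega)
  rw [hb0, ha0, add_zero] at this
  rw [← this, div_lt_one hcp] at hb1
  linarith

lemma lf_c0_gt (N : ℕ) (hN : 2 ≤ N) (a b c : ℕ → ℝ) (h : NormLFSystem N a b c)
    (ha0 : a 0 ≠ 1) : -1 < c 0 / (1 - a 0) := by
  have ha1 : a 0 < 1 := lt_of_le_of_ne (lf_a0_le_one N hN a b c h) ha0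
  obtain ⟨hc, hab, hb0, hrec, hlast⟩ := h
  have hcp := hc 0 (by omega)
  have h2 : a 0 - b 0 * c 0 ≤ (c 0 + 1)^2 := le_trans (hab 0 (by omega)).2 (min_le_right _ _)
  rw [hb0] at h2
  have hlt : a 0 < c 0 + 1 := by
    rcases le_or_gt 1 (c 0 + 1) with h' | h'
    · linarith
    · nlinarith
  rw [lt_div_iff₀ (by linarith)]
  linarith

lemma lf_alpha (N : ℕ) (hN : 2 ≤ N) (a b c : ℕ → ℝ) (h : NormLFSystem N a b c) :
    sInf ({0} ∪ (if a 0 = 1 then (∅ : Set ℝ) else {c 0 / (1 - a 0)}) ∪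
      {x | ∃ i, 1 ≤ i ∧ i < N ∧ x = fixPt a b c i}) = -1 ↔
    b (N - 1) + c (N - 1) = 0 := by
  set S : Set ℝ := {0} ∪ (if a 0 = 1 then (∅ : Set ℝ) else {c 0 / (1 - a 0)}) ∪
      {x | ∃ i, 1 ≤ i ∧ i < N ∧ x = fixPt a b c i} with hS
  have hfin : S.Finite := by
    refine (Set.Finite.union (Set.Finite.union (Set.finite_singleton 0) ?_) ?_)
    · split_ifs
      · exact Set.finite_empty
      · exact Set.finite_singleton _
    · have hsub : {x | ∃ i, 1 ≤ i ∧ i < N ∧ x = fixPt a b c i} ⊆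
          fixPt a b c '' (Set.Ico 1 N) := by
        rintro x ⟨i, h1, h2, rfl⟩; exact ⟨i, ⟨h1, h2⟩, rfl⟩
      exact ((Set.finite_Ico 1 N).image _).subset hsub
  have hne : S.Nonempty := ⟨0, Or.inl (Or.inl rfl)⟩
  have hlb : ∀ x ∈ S, -1 ≤ x := by
    rintro x ((hx | hx) | ⟨i, h1, h2, rfl⟩)
    · rw [Set.mem_singleton_iff] at hx; rw [hx]; norm_num
    · split_ifs at hx with ha
      · exact absurd hx (Set.notMem_empty x)
      · rw [Set.mem_singleton_iff] at hx; rw [hx]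
        exact (lf_c0_gt N hN a b c h ha).le
    · exact lf_fix_ge N hN a b c h i h1 h2
  constructor
  · intro hα
    have hmem := hne.csInf_mem hfin
    rw [hα] at hmem
    rcases hmem with ((hx | hx) | ⟨i, h1, h2, hx⟩)
    · rw [Set.mem_singleton_iff] at hx; norm_num at hx
    · split_ifs at hx with ha
      · exact absurd hx (Set.notMem_empty _)
      · rw [Set.mem_singleton_iff] at hx
        exact absurd hx.symm (ne_of_gt (lf_c0_gt N hN a b c h ha))
    · exact (lf_fix_eq N hN a b c h i h1 h2 hx.symm).2
  · intro hbc
    have hmem : (-1 : ℝ) ∈ S :=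
      Or.inr ⟨N - 1, by omega, by omega, (lf_fix_neg_one N hN a b c h hbc).symm⟩
    exact le_antisymm (csInf_le ⟨-1, hlb⟩ hmem) (le_csInf hne hlb)

lemma lf_beta (N : ℕ) (hN : 2 ≤ N) (a b c : ℕ → ℝ) (h : NormLFSystem N a b c) :
    sSup ({(0 : EReal)} ∪
      (if a 0 = 1 then {(⊤ : EReal)} else {((c 0 / (1 - a 0) : ℝ) : EReal)}) ∪
      {x | ∃ i, 1 ≤ i ∧ i < N ∧ x = ((fixPt a b c i : ℝ) : EReal)}) = ⊤ ↔ a 0 = 1 := by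
  constructor
  · intro htop
    by_contra ha
    rw [if_neg ha] at htop
    set S : Set EReal := {(0 : EReal)} ∪ {((c 0 / (1 - a 0) : ℝ) : EReal)} ∪
      {x | ∃ i, 1 ≤ i ∧ i < N ∧ x = ((fixPt a b c i : ℝ) : EReal)} with hS
    have hfin : S.Finite := by
      refine (Set.Finite.union (Set.Finite.union (Set.finite_singleton _)
        (Set.finite_singleton _)) ?_)
      have hsub : {x : EReal | ∃ i, 1 ≤ i ∧ i < N ∧ x = ((fixPt a b c i : ℝ) : EReal)} ⊆
          (fun i => ((fixPt a b c i : ℝ) : EReal)) '' (Set.Ico 1 N) := by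
        rintro x ⟨i, h1, h2, rfl⟩; exact ⟨i, ⟨h1, h2⟩, rfl⟩
      exact ((Set.finite_Ico 1 N).image _).subset hsub
    have hne : S.Nonempty := ⟨0, Or.inl (Or.inl rfl)⟩
    have hmem := hne.csSup_mem hfin
    rw [htop] at hmem
    rcases hmem with ((hx | hx) | ⟨i, _, _, hx⟩)
    · rw [Set.mem_singleton_iff] at hx; exact absurd hx (by simp)
    · rw [Set.mem_singleton_iff] at hx; exact (EReal.coe_ne_top _ hx.symm)
    · exact (EReal.coe_ne_top _ hx.symm)
  · intro ha
    have hmem : (⊤ : EReal) ∈ ({(0 : EReal)} ∪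
        (if a 0 = 1 then {(⊤ : EReal)} else {((c 0 / (1 - a 0) : ℝ) : EReal)}) ∪
        {x | ∃ i, 1 ≤ i ∧ i < N ∧ x = ((fixPt a b c i : ℝ) : EReal)}) :=
      Or.inl (Or.inr (by rw [if_pos ha]; exact rfl))
    exact top_le_iff.mp (le_sSup hmem)

/-- (i) `a 0 ≤ 1` and `b (N−1) + c (N−1) ≥ 0`;
(ii) `β = +∞ ↔ a 0 = 1` and `α = −1 ↔ b (N−1) + c (N−1) = 0`;
(iii) if `a 0 = 1` then `H 0 y = y + c 0`, `H 0` has no fixed point in `Y ∩ ℝ`,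
its fixed point in `[−1,+∞]` is `+∞` (i.e. `H 0 → +∞` at `+∞`), and `𝔭 0 = (1,0,…,0)`;
(iv) if `b (N−1) + c (N−1) = 0` then the fixed point of `H (N−1)` in `Y` is `−1`
and `𝔭 (N−1) = (0,…,0,1)`. -/
theorem stmt12 (N : ℕ) (hN : 2 ≤ N) (a b c : ℕ → ℝ) (hLF : NormLFSystem N a b c) :
    (a 0 ≤ 1 ∧ 0 ≤ b (N - 1) + c (N - 1)) ∧
    ((betaLF N a b c = ⊤ ↔ a 0 = 1) ∧
      (alphaLF N a b c = -1 ↔ b (N - 1) + c (N - 1) = 0)) ∧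
    (a 0 = 1 →
      (∀ y : ℝ, HLF a b c 0 y = y + c 0) ∧
      (∀ y : ℝ, alphaLF N a b c ≤ y → (y : EReal) ≤ betaLF N a b c →
        HLF a b c 0 y ≠ y) ∧
      Tendsto (HLF a b c 0) atTop atTop ∧
      (∀ k < N, pVec N a b c 0 k = if k = 0 then 1 else 0)) ∧
    (b (N - 1) + c (N - 1) = 0 →
      fixPt a b c (N - 1) = -1 ∧ HLF a b c (N - 1) (-1) = -1 ∧
      (∀ k < N, pVec N a b c (N - 1) k = if k = N - 1 then 1 else 0)) := by
  have ha0le := lf_a0_le_one N hN a b c hLF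
  have hbc0 := lf_bc_nonneg N hN a b c hLF
  refine ⟨⟨ha0le, hbc0⟩, ⟨?_, ?_⟩, ?_, ?_⟩
  · unfold betaLF; exact lf_beta N hN a b c hLF
  · unfold alphaLF; exact lf_alpha N hN a b c hLF
  · intro ha0
    have hc0 := lf_c0_pos N hN a b c hLF ha0
    have hb0 : b 0 = 0 := hLF.2.2.1
    have hHy : ∀ y : ℝ, HLF a b c 0 y = y + c 0 := fun y => by
      simp [HLF, hb0, ha0]
    refine ⟨hHy, ?_, ?_, ?_⟩
    · intro y _ _ hy
      rw [hHy y] at hy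
      linarith
    · have hfun : HLF a b c 0 = fun y => y + c 0 := funext hHy
      rw [hfun]
      exact tendsto_atTop_add_const_right _ _ tendsto_id
    · intro k hk
      simp [pVec, ha0]
  · intro hbc
    have hfix := lf_fix_neg_one N hN a b c hLF hbc
    have hback := lf_back N hN a b c hLF (N - 1) (by omega)
    obtain ⟨hc, hab, hb0, hrec, hlast⟩ := hLF
    have hcp := hc (N - 1) (by omega)
    have heq : a (N - 1) + b (N - 1) = c (N - 1) + 1 := by
      rw [div_eq_one_iff_eq (ne_of_gt hcp)] at hlast; exact hlast
    refine ⟨hfix, ?_, ?_⟩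
    · show (a (N - 1) * (-1) + c (N - 1)) / (b (N - 1) * (-1) + 1) = -1
      rw [div_eq_iff (ne_of_gt (by linarith [hback.2.1] : (0:ℝ) < b (N - 1) * (-1) + 1))]
      linarith
    · intro k hk
      have h1 : ¬(N - 1 = 0 ∧ a 0 = 1) := by rintro ⟨h', _⟩; omega
      unfold pVec
      rw [if_neg h1, if_pos hfix]
end

section
/- Let {g_i}_{i∈𝓘_N} be a normalized LF system with a_0 < 1 and b_{N−1}+c_{N−1} > 0, so that Y = [α,β] is a compact subinterval of (−1,+∞). For q ∈ 𝒫_N-bar, y ∈ Y and i ∈ 𝓘_N, define W_i(q,y) := max{ max_{k∈𝓘_N} |G_k(y) − q_k|, max_{k∈𝓘_N} |G_k(H_i(y)) − q_k| }. Then: (i) (q,y) ↦ W_i(q,y) is continuous on 𝒫_N-bar × Y; (ii) W_i(q,y) = 0 if and only if q = 𝔭_i and y is the fixed point y_i of H_i. -/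
set_option linter.unusedSectionVars false
set_option maxHeartbeats 1000000


open Set Filter Topology

/-- `β` as a real number (the case `a 0 < 1`, where the convention `+∞` is not
needed): the maximum of `{0, c 0/(1 − a 0), fixPt i (1 ≤ i ≤ N−1)}`. -/
noncomputable def betaRealLF (N : ℕ) (a b c : ℕ → ℝ) : ℝ :=
  sSup ({0} ∪ {c 0 / (1 - a 0)} ∪ {x | ∃ i, 1 ≤ i ∧ i < N ∧ x = fixPt a b c i})

/-- A probability vector on `𝓘_N`: nonnegative entries summing to `1`. -/
def ProbVec (N : ℕ) (p : ℕ → ℝ) : Prop :=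
  (∀ i < N, 0 ≤ p i) ∧ ∑ i ∈ Finset.range N, p i = 1

/-- `W_i(q,y) = max{max_k |G k y − q k|, max_k |G k (H i y) − q k|}`. -/
noncomputable def WFun (N : ℕ) (a b c : ℕ → ℝ) (i : ℕ) (q : ℕ → ℝ) (y : ℝ) : ℝ :=
  max (sSup {v | ∃ k < N, v = |GLF a b c k y - q k|})
      (sSup {v | ∃ k < N, v = |GLF a b c k (HLF a b c i y) - q k|})

section helpers

variable {N : ℕ} {a b c : ℕ → ℝ}
variable (hN : 2 ≤ N)
variable (hc : ∀ i < N, 0 < c i + 1)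
variable (hdet : ∀ i < N, 0 < a i - b i * c i ∧ a i - b i * c i ≤ min 1 ((c i + 1) ^ 2))
variable (hb0 : b 0 = 0)
variable (hstep : ∀ i, i + 1 < N → (a i + b i) / (c i + 1) = b (i + 1))
variable (hlast : (a (N - 1) + b (N - 1)) / (c (N - 1) + 1) = 1)

include hN hc hdet hb0 hstep hlast

/-- b is strictly increasing along 0..N-1, and b (N-1) < 1. -/
lemma b_lt_succ : ∀ i, i + 1 < N → b i < b (i + 1) := by
  intro i h
  have hci := hc i (by omega)
  have hd := (hdet i (by omega)).1
  have := hstep i h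
  rw [← this, lt_div_iff₀ hci]
  nlinarith

lemma b_last_lt_one : b (N - 1) < 1 := by
  have hci := hc (N-1) (by omega)
  have hd := (hdet (N-1) (by omega)).1
  have h1 : a (N-1) + b (N-1) = c (N-1) + 1 := by
    field_simp at hlast; linarith [hlast]
  nlinarith

lemma b_mono : ∀ i j, i ≤ j → j < N → b i ≤ b j := by
  intro i j hij hj
  induction j with
  | zero =>
    have : i = 0 := by omega
    subst this; rfl
  | succ n ih =>
    rcases Nat.lt_or_ge i (n+1) with h | h
    · exact le_trans (ih (by omega) (by omega)) (le_of_lt (b_lt_succ hN hc hdet hb0 hstep hlast n hj))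
    · have : i = n + 1 := by omega
      subst this; rfl

lemma b_nonneg : ∀ i < N, 0 ≤ b i := by
  intro i h
  have := b_mono hN hc hdet hb0 hstep hlast 0 i (by omega) h
  linarith [this, hb0.ge, hb0.le]

lemma b_lt_one : ∀ i < N, b i < 1 := by
  intro i h
  have h1 := b_mono hN hc hdet hb0 hstep hlast i (N-1) (by omega) (by omega)
  have := b_last_lt_one hN hc hdet hb0 hstep hlast
  linarith

lemma b_pos : ∀ i, 1 ≤ i → i < N → 0 < b i := by
  intro i h1 h2
  have hb1 : 0 < b 1 := by
    have := hstep 0 (by omega)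
    have hci := hc 0 (by omega)
    have hd := (hdet 0 (by omega)).1
    rw [← this, hb0]
    have : (0:ℝ) < a 0 := by nlinarith
    positivity
  have := b_mono hN hc hdet hb0 hstep hlast 1 i h1 h2
  linarith

lemma abc_le : ∀ i < N, a i + b i ≤ c i + 1 := by
  intro i h
  have hci := hc i h
  rcases Nat.lt_or_ge (i+1) N with h' | h'
  · have := hstep i h'
    have hb1 := b_lt_one hN hc hdet hb0 hstep hlast (i+1) h'
    rw [← this, div_lt_one hci] at hb1
    linarith
  · have : i = N - 1 := by omega
    subst this
    field_simp at hlast; linarith [hlast]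

lemma abc_lt : ∀ i, i + 1 < N → a i + b i < c i + 1 := by
  intro i h
  have hci := hc i (by omega)
  have := hstep i h
  have hb1 := b_lt_one hN hc hdet hb0 hstep hlast (i+1) h
  rw [← this, div_lt_one hci] at hb1
  linarith

lemma ab_pos : ∀ i < N, 0 < a i + b i := by
  intro i h
  have hd := (hdet i h).1
  have hci := hc i h
  have hbn := b_nonneg hN hc hdet hb0 hstep hlast i h
  nlinarith

lemma disc_nonneg : ∀ i < N, 0 ≤ (1 - a i) ^ 2 + 4 * b i * c i := by
  intro i h
  have hle := abc_le hN hc hdet hb0 hstep hlast i h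
  have hbn := b_nonneg hN hc hdet hb0 hstep hlast i h
  rcases le_or_gt 0 (c i) with h' | h'
  · nlinarith
  · nlinarith [sq_nonneg (2 * c i + 1 - a i), mul_nonneg (neg_nonneg.mpr h'.le) (by linarith : (0:ℝ) ≤ c i + 1 - a i - b i)]

end helpers

section fixpt

variable {N : ℕ} {a b c : ℕ → ℝ}
variable (hN : 2 ≤ N)
variable (hc : ∀ i < N, 0 < c i + 1)
variable (hdet : ∀ i < N, 0 < a i - b i * c i ∧ a i - b i * c i ≤ min 1 ((c i + 1) ^ 2))
variable (hb0 : b 0 = 0)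
variable (hstep : ∀ i, i + 1 < N → (a i + b i) / (c i + 1) = b (i + 1))
variable (hlast : (a (N - 1) + b (N - 1)) / (c (N - 1) + 1) = 1)
variable (ha : a 0 < 1)
variable (hbc : 0 < b (N - 1) + c (N - 1))

include hN hc hdet hb0 hstep hlast ha hbc

lemma a0_lt_c0 : a 0 < c 0 + 1 := by
  have hd := hdet 0 (by omega)
  rw [hb0] at hd
  have h1 : a 0 ≤ (c 0 + 1)^2 := by
    have := hd.2; simp at this; linarith [this.2]
  have hc0 := hc 0 (by omega)
  rcases le_or_gt 1 (c 0 + 1) with h | h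
  · linarith
  · nlinarith

omit hN hc hdet hb0 hstep hlast ha hbc in
lemma fixPt0_eq : fixPt a b c 0 = c 0 / (1 - a 0) := if_pos rfl

omit hN hc hdet hb0 hstep hlast ha hbc in
lemma fixPt_eq {i : ℕ} (h : i ≠ 0) :
    fixPt a b c i = (a i - 1 + Real.sqrt ((1 - a i) ^ 2 + 4 * b i * c i)) / (2 * b i) :=
  if_neg h

/-- the fixed point satisfies the quadratic equation -/
lemma fixPt_root : ∀ i < N, b i * (fixPt a b c i)^2 + (1 - a i) * fixPt a b c i - c i = 0 := by
  intro i h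
  rcases Nat.eq_zero_or_pos i with rfl | hpos
  · rw [fixPt0_eq, hb0]
    have h1 : (1:ℝ) - a 0 ≠ 0 := by linarith
    field_simp
    ring
  · have hb := b_pos hN hc hdet hb0 hstep hlast i hpos h
    have hd := disc_nonneg hN hc hdet hb0 hstep hlast i h
    set s := Real.sqrt ((1 - a i) ^ 2 + 4 * b i * c i) with hs
    have hs2 : s^2 = (1 - a i) ^ 2 + 4 * b i * c i := Real.sq_sqrt hd
    rw [fixPt_eq (by omega : i ≠ 0), ← hs]
    set y := (a i - 1 + s) / (2 * b i) with hy
    clear_value y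
    have hyv : 2 * b i * y = a i - 1 + s := by
      rw [hy]; field_simp
    have hsval : s = 2 * b i * y - a i + 1 := by linarith
    have key : (2 * b i * y - a i + 1)^2 = (1 - a i)^2 + 4 * b i * c i := by
      rw [← hsval]; exact hs2
    have h4 : 4 * b i * (b i * y^2 + (1 - a i) * y - c i) = 0 := by
      linear_combination key
    have hbne : (4:ℝ) * b i ≠ 0 := by positivity
    exact (mul_eq_zero.mp h4).resolve_left hbne

/-- the fixed point is > -1 -/
lemma fixPt_gt : ∀ i < N, -1 < fixPt a b c i := by
  intro i h
  rcases Nat.eq_zero_or_pos i with rfl | hpos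
  · rw [fixPt0_eq]
    rw [lt_div_iff₀ (by linarith : (0:ℝ) < 1 - a 0)]
    have := a0_lt_c0 hN hc hdet hb0 hstep hlast ha hbc
    linarith
  · have hb := b_pos hN hc hdet hb0 hstep hlast i hpos h
    have hd := disc_nonneg hN hc hdet hb0 hstep hlast i h
    set s := Real.sqrt ((1 - a i) ^ 2 + 4 * b i * c i) with hs
    have hs2 : s^2 = (1 - a i) ^ 2 + 4 * b i * c i := Real.sq_sqrt hd
    have hsn : 0 ≤ s := Real.sqrt_nonneg _
    rw [fixPt_eq (by omega : i ≠ 0), ← hs]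
    rw [lt_div_iff₀ (by positivity : (0:ℝ) < 2 * b i)]
    rcases Nat.lt_or_ge (i+1) N with h' | h'
    · have hlt := abc_lt hN hc hdet hb0 hstep hlast i h'
      nlinarith
    · have : i = N - 1 := by omega
      subst this
      have heq : a (N-1) + b (N-1) = c (N-1) + 1 := by
        have hci := hc (N-1) (by omega)
        field_simp at hlast; linarith
      nlinarith

/-- uniqueness of the fixed point among roots > -1 -/
lemma fixPt_unique : ∀ i < N, ∀ y : ℝ, -1 < y →
    b i * y^2 + (1 - a i) * y - c i = 0 → y = fixPt a b c i := by
  intro i h y hy hroot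
  rcases Nat.eq_zero_or_pos i with rfl | hpos
  · rw [fixPt0_eq, hb0] at *
    rw [eq_div_iff (by linarith : (1:ℝ) - a 0 ≠ 0)]
    nlinarith [hroot]
  · have hb := b_pos hN hc hdet hb0 hstep hlast i hpos h
    have hd := disc_nonneg hN hc hdet hb0 hstep hlast i h
    have hle := abc_le hN hc hdet hb0 hstep hlast i h
    set s := Real.sqrt ((1 - a i) ^ 2 + 4 * b i * c i) with hs
    have hs2 : s^2 = (1 - a i) ^ 2 + 4 * b i * c i := Real.sq_sqrt hd
    have hsn : 0 ≤ s := Real.sqrt_nonneg _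
    rw [fixPt_eq (by omega : i ≠ 0), ← hs]
    have hfac : (2 * b i * y + (1 - a i) - s) * (2 * b i * y + (1 - a i) + s) = 0 := by
      nlinarith [hroot, hs2]
    rcases mul_eq_zero.mp hfac with hcase | hcase
    · rw [eq_div_iff (by positivity : (2:ℝ) * b i ≠ 0)]
      linarith
    · by_cases hs0 : s = 0
      · rw [eq_div_iff (by positivity : (2:ℝ) * b i ≠ 0)]
        rw [hs0] at hcase ⊢
        linarith
      · exfalso
        have hspos : 0 < s := lt_of_le_of_ne hsn (Ne.symm hs0)
        have h1 : 0 < a i - 1 + 2 * b i - s := by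
          nlinarith [mul_pos hb (show (0:ℝ) < y + 1 by linarith)]
        have h2 : 0 < a i - 1 + 2 * b i + s := by linarith
        nlinarith [mul_pos h1 h2, hs2, mul_nonneg hb.le (show (0:ℝ) ≤ c i + 1 - a i - b i by linarith)]

end fixpt

noncomputable def TLF (N : ℕ) (a b c : ℕ → ℝ) : Finset ℝ :=
  insert (0:ℝ) ((Finset.range N).image (fixPt a b c))


section interval

variable {N : ℕ} {a b c : ℕ → ℝ}
variable (hN : 2 ≤ N)
variable (hc : ∀ i < N, 0 < c i + 1)
variable (hdet : ∀ i < N, 0 < a i - b i * c i ∧ a i - b i * c i ≤ min 1 ((c i + 1) ^ 2))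
variable (hb0 : b 0 = 0)
variable (hstep : ∀ i, i + 1 < N → (a i + b i) / (c i + 1) = b (i + 1))
variable (hlast : (a (N - 1) + b (N - 1)) / (c (N - 1) + 1) = 1)
variable (ha : a 0 < 1)
variable (hbc : 0 < b (N - 1) + c (N - 1))

include hN hc hdet hb0 hstep hlast ha hbc

omit hc hdet hb0 hstep hlast hbc in
lemma setS_eq :
    ({0} ∪ {c 0 / (1 - a 0)} ∪ {x | ∃ i, 1 ≤ i ∧ i < N ∧ x = fixPt a b c i} : Set ℝ)
      = ↑(TLF N a b c) := by
  ext x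
  simp only [TLF, Finset.coe_insert, Finset.coe_image, Finset.coe_range, Set.mem_insert_iff,
    Set.mem_image, Set.mem_Iio, Set.mem_union, Set.mem_singleton_iff, Set.mem_setOf_eq]
  constructor
  · rintro ((h0 | h1) | ⟨i, h1, h2, rfl⟩)
    · exact Or.inl h0
    · refine Or.inr ⟨0, by omega, ?_⟩
      rw [fixPt0_eq, h1]
    · exact Or.inr ⟨i, h2, rfl⟩
  · rintro (h0 | ⟨i, hiN, rfl⟩)
    · exact Or.inl (Or.inl h0)
    · rcases Nat.eq_zero_or_pos i with rfl | hpos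
      · refine Or.inl (Or.inr ?_)
        rw [fixPt0_eq]
      · exact Or.inr ⟨i, hpos, hiN, rfl⟩

omit hc hdet hb0 hstep hlast hbc in
lemma alpha_eq : alphaLF N a b c = sInf ↑(TLF N a b c) := by
  rw [alphaLF, if_neg (by linarith : ¬ a 0 = 1), setS_eq hN ha]

omit hc hdet hb0 hstep hlast hbc in
lemma beta_eq : betaRealLF N a b c = sSup ↑(TLF N a b c) := by
  rw [betaRealLF, setS_eq hN ha]

omit hc hdet hb0 hstep hlast hbc in
lemma TLF_nonempty : (TLF N a b c : Set ℝ).Nonempty := ⟨0, by simp [TLF]⟩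

lemma fixPt_mem_Icc : ∀ i < N, fixPt a b c i ∈ Icc (alphaLF N a b c) (betaRealLF N a b c) := by
  intro i h
  have hmem : fixPt a b c i ∈ (TLF N a b c : Set ℝ) := by
    simp only [TLF, Finset.coe_insert, Set.mem_insert_iff, Finset.coe_image, Set.mem_image]
    exact Or.inr ⟨i, by simpa using h, rfl⟩
  rw [alpha_eq hN ha, beta_eq hN ha]
  exact ⟨csInf_le (TLF N a b c).bddBelow hmem, le_csSup (TLF N a b c).bddAbove hmem⟩

lemma neg_one_lt_alpha : -1 < alphaLF N a b c := by
  rw [alpha_eq hN ha]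
  set v := sInf (TLF N a b c : Set ℝ) with hv
  have h1 : v ∈ (TLF N a b c : Set ℝ) :=
    Set.Nonempty.csInf_mem (TLF_nonempty hN ha) (TLF N a b c).finite_toSet
  simp only [TLF, Finset.coe_insert, Set.mem_insert_iff, Finset.coe_image, Set.mem_image] at h1
  rcases h1 with h1 | ⟨j, hj, h1⟩
  · rw [h1]; norm_num
  · rw [← h1]
    exact fixPt_gt hN hc hdet hb0 hstep hlast ha hbc j (by simpa using hj)

lemma mem_Icc_gt : ∀ y ∈ Icc (alphaLF N a b c) (betaRealLF N a b c), (-1:ℝ) < y := by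
  intro y hy
  have := neg_one_lt_alpha hN hc hdet hb0 hstep hlast ha hbc
  exact lt_of_lt_of_le this hy.1

lemma den1_pos : ∀ k < N, ∀ y : ℝ, -1 < y → 0 < b k * y + 1 := by
  intro k hk y hy
  have h1 := b_nonneg hN hc hdet hb0 hstep hlast k hk
  have h2 := b_lt_one hN hc hdet hb0 hstep hlast k hk
  nlinarith [mul_nonneg h1 (by linarith : (0:ℝ) ≤ y + 1)]

lemma den2_pos : ∀ k < N, ∀ y : ℝ, -1 < y → 0 < (a k + b k) * y + (c k + 1) := by
  intro k hk y hy
  have h1 := ab_pos hN hc hdet hb0 hstep hlast k hk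
  have h2 := abc_le hN hc hdet hb0 hstep hlast k hk
  nlinarith [mul_pos h1 (by linarith : (0:ℝ) < y + 1)]

lemma HLF_gt : ∀ k < N, ∀ y : ℝ, -1 < y → -1 < HLF a b c k y := by
  intro k hk y hy
  have h1 := den1_pos hN hc hdet hb0 hstep hlast ha hbc k hk y hy
  have h2 := den2_pos hN hc hdet hb0 hstep hlast ha hbc k hk y hy
  rw [HLF, lt_div_iff₀ h1]
  nlinarith

lemma HLF_fix_iff : ∀ k < N, ∀ y : ℝ, -1 < y →
    (HLF a b c k y = y ↔ b k * y^2 + (1 - a k) * y - c k = 0) := by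
  intro k hk y hy
  have h1 := den1_pos hN hc hdet hb0 hstep hlast ha hbc k hk y hy
  rw [HLF, div_eq_iff (ne_of_gt h1)]
  constructor <;> intro h <;> nlinarith [h]

lemma HLF_fix : ∀ k < N, HLF a b c k (fixPt a b c k) = fixPt a b c k := by
  intro k hk
  have hg := fixPt_gt hN hc hdet hb0 hstep hlast ha hbc k hk
  rw [HLF_fix_iff hN hc hdet hb0 hstep hlast ha hbc k hk _ hg]
  exact fixPt_root hN hc hdet hb0 hstep hlast ha hbc k hk

lemma HLF_fix_unique : ∀ k < N, ∀ y : ℝ, -1 < y → HLF a b c k y = y → y = fixPt a b c k := by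
  intro k hk y hy h
  rw [HLF_fix_iff hN hc hdet hb0 hstep hlast ha hbc k hk y hy] at h
  exact fixPt_unique hN hc hdet hb0 hstep hlast ha hbc k hk y hy h

lemma GLF_inj : ∀ y z : ℝ, -1 < y → -1 < z → GLF a b c 0 y = GLF a b c 0 z → y = z := by
  intro y z hy hz hG
  have hd1y := den1_pos hN hc hdet hb0 hstep hlast ha hbc 0 (by omega) y hy
  have hd2y := den2_pos hN hc hdet hb0 hstep hlast ha hbc 0 (by omega) y hy
  have hd1z := den1_pos hN hc hdet hb0 hstep hlast ha hbc 0 (by omega) z hz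
  have hd2z := den2_pos hN hc hdet hb0 hstep hlast ha hbc 0 (by omega) z hz
  rw [GLF, GLF, div_eq_div_iff (mul_pos hd1y hd2y).ne' (mul_pos hd1z hd2z).ne'] at hG
  rw [hb0] at hG
  have ha0 : 0 < a 0 := by
    have := (hdet 0 (by omega)).1; rw [hb0] at this; linarith
  have hac := a0_lt_c0 hN hc hdet hb0 hstep hlast ha hbc
  have key : a 0 * (c 0 + 1 - a 0) * (y - z) = 0 := by linear_combination hG
  have h1 : a 0 * (c 0 + 1 - a 0) ≠ 0 := (mul_pos ha0 (by linarith)).ne'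
  have := (mul_eq_zero.mp key).resolve_left h1
  linarith

end interval

lemma sSup_eq_sup'' {N : ℕ} (hN0 : 0 < N) (F : ℕ → ℝ) :
    sSup {v | ∃ k < N, v = F k}
      = (Finset.range N).sup' (Finset.nonempty_range_iff.mpr (by omega)) F := by
  rw [Finset.sup'_eq_csSup_image]
  congr 1
  ext v
  simp only [Finset.coe_range, Set.mem_image, Set.mem_Iio, Set.mem_setOf_eq]
  constructor
  · rintro ⟨k, hk, rfl⟩; exact ⟨k, hk, rfl⟩
  · rintro ⟨k, hk, rfl⟩; exact ⟨k, hk, rfl⟩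

lemma continuousOn_finset_sup' {X : Type*} [TopologicalSpace X] {D : Set X} :
    ∀ {s : Finset ℕ} (hs : s.Nonempty) (f : ℕ → X → ℝ),
    (∀ k ∈ s, ContinuousOn (f k) D) →
    ContinuousOn (fun x => s.sup' hs fun k => f k x) D := by
  intro s hs
  induction hs using Finset.Nonempty.cons_induction with
  | singleton a => intro f h; simpa using h a (by simp)
  | cons a s ha hs ih =>
    intro f h
    have h1 := h a (by simp)
    have h2 := ih f (fun k hk => h k (by simp [hk]))
    have e : ∀ x, (Finset.cons a s ha).sup' (Finset.cons_nonempty ha) (fun k => f k x)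
        = f a x ⊔ s.sup' hs (fun k => f k x) := fun x => Finset.sup'_cons hs _
    simp only [e]
    exact h1.sup h2

lemma sup'_abs_nonneg {N : ℕ} (hN0 : 0 < N) (F : ℕ → ℝ) :
    0 ≤ (Finset.range N).sup' (Finset.nonempty_range_iff.mpr (by omega)) (fun k => |F k|) :=
  le_trans (abs_nonneg (F 0))
    (Finset.le_sup' (fun k => |F k|) (Finset.mem_range.mpr hN0))

lemma sup'_abs_eq_zero_iff {N : ℕ} (hN0 : 0 < N) (F : ℕ → ℝ) :
    (Finset.range N).sup' (Finset.nonempty_range_iff.mpr (by omega)) (fun k => |F k|) = 0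
      ↔ ∀ k < N, F k = 0 := by
  constructor
  · intro h k hk
    have h2 := Finset.le_sup' (fun k => |F k|) (Finset.mem_range.mpr hk)
    rw [h] at h2
    exact abs_eq_zero.mp (le_antisymm h2 (abs_nonneg _))
  · intro h
    apply le_antisymm
    · rw [Finset.sup'_le_iff]
      intro k hk
      rw [h k (Finset.mem_range.mp hk)]
      simp
    · exact sup'_abs_nonneg hN0 F


/-- for a normalized LF system with `a 0 < 1` and
`b (N−1) + c (N−1) > 0` (so `Y = [α,β]` is a compact subinterval of `(−1,∞)`):
(i) `(q,y) ↦ W_i(q,y)` is continuous on `𝒫_N-bar × Y`;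
(ii) `W_i(q,y) = 0` iff `q = 𝔭 i` and `y` is the fixed point of `H i`. -/
theorem stmt15 (N : ℕ) (hN : 2 ≤ N) (a b c : ℕ → ℝ) (hLF : NormLFSystem N a b c)
    (ha : a 0 < 1) (hbc : 0 < b (N - 1) + c (N - 1)) (i : ℕ) (hi : i < N) :
    ContinuousOn (fun p : (ℕ → ℝ) × ℝ => WFun N a b c i p.1 p.2)
      ({q | ProbVec N q} ×ˢ Set.Icc (alphaLF N a b c) (betaRealLF N a b c)) ∧
    ∀ q : ℕ → ℝ, ProbVec N q →
      ∀ y ∈ Set.Icc (alphaLF N a b c) (betaRealLF N a b c),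
        (WFun N a b c i q y = 0 ↔
          (∀ k < N, q k = pVec N a b c i k) ∧ y = fixPt a b c i) := by
  obtain ⟨hc, hdet, hb0, hstep, hlast⟩ := hLF
  have hfgt0 := fixPt_gt hN hc hdet hb0 hstep hlast ha hbc i hi
  have hpv : pVec N a b c i = fun k => GLF a b c k (fixPt a b c i) := by
    rw [pVec, if_neg, if_neg (ne_of_gt hfgt0)]
    rintro ⟨-, h⟩
    linarith
  have hN0 : 0 < N := by omega
  have hwe : ∀ (q : ℕ → ℝ) (y : ℝ), WFun N a b c i q y =
      max ((Finset.range N).sup' (Finset.nonempty_range_iff.mpr (by omega))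
            (fun k => |GLF a b c k y - q k|))
          ((Finset.range N).sup' (Finset.nonempty_range_iff.mpr (by omega))
            (fun k => |GLF a b c k (HLF a b c i y) - q k|)) := by
    intro q y
    rw [WFun, sSup_eq_sup'' hN0, sSup_eq_sup'' hN0]
  set D := {q : ℕ → ℝ | ProbVec N q}
        ×ˢ Set.Icc (alphaLF N a b c) (betaRealLF N a b c) with hD
  have hD2 : ∀ p ∈ D, (-1:ℝ) < p.2 := by
    rintro p hp
    exact mem_Icc_gt hN hc hdet hb0 hstep hlast ha hbc p.2 hp.2
  -- continuity of the building blocks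
  have hH : ContinuousOn (fun p : (ℕ → ℝ) × ℝ => HLF a b c i p.2) D := by
    simp only [HLF]
    apply ContinuousOn.div
    · fun_prop
    · fun_prop
    · intro p hp
      exact (den1_pos hN hc hdet hb0 hstep hlast ha hbc i hi p.2 (hD2 p hp)).ne'
  have hHgt : ∀ p ∈ D, (-1:ℝ) < HLF a b c i p.2 := fun p hp =>
    HLF_gt hN hc hdet hb0 hstep hlast ha hbc i hi p.2 (hD2 p hp)
  have hGy : ∀ k < N, ContinuousOn (fun p : (ℕ → ℝ) × ℝ => GLF a b c k p.2) D := by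
    intro k hk
    simp only [GLF]
    apply ContinuousOn.div
    · fun_prop
    · fun_prop
    · intro p hp
      exact (mul_pos (den1_pos hN hc hdet hb0 hstep hlast ha hbc k hk p.2 (hD2 p hp))
        (den2_pos hN hc hdet hb0 hstep hlast ha hbc k hk p.2 (hD2 p hp))).ne'
  have hGH : ∀ k < N, ContinuousOn (fun p : (ℕ → ℝ) × ℝ => GLF a b c k (HLF a b c i p.2)) D := by
    intro k hk
    simp only [GLF]
    apply ContinuousOn.div
    · exact continuousOn_const.mul (hH.add continuousOn_const)
    · exact ((continuousOn_const.mul hH).add continuousOn_const).mul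
        ((continuousOn_const.mul hH).add continuousOn_const)
    · intro p hp
      exact (mul_pos (den1_pos hN hc hdet hb0 hstep hlast ha hbc k hk _ (hHgt p hp))
        (den2_pos hN hc hdet hb0 hstep hlast ha hbc k hk _ (hHgt p hp))).ne'
  have hqk : ∀ k : ℕ, ContinuousOn (fun p : (ℕ → ℝ) × ℝ => p.1 k) D := by
    intro k; fun_prop
  constructor
  · have heq : (fun p : (ℕ → ℝ) × ℝ => WFun N a b c i p.1 p.2) =
        fun p : (ℕ → ℝ) × ℝ =>
          max ((Finset.range N).sup' (Finset.nonempty_range_iff.mpr (by omega))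
                (fun k => |GLF a b c k p.2 - p.1 k|))
              ((Finset.range N).sup' (Finset.nonempty_range_iff.mpr (by omega))
                (fun k => |GLF a b c k (HLF a b c i p.2) - p.1 k|)) :=
      funext fun p => hwe p.1 p.2
    rw [heq]
    apply ContinuousOn.sup
    · apply continuousOn_finset_sup'
      intro k hk
      exact ((hGy k (Finset.mem_range.mp hk)).sub (hqk k)).abs
    · apply continuousOn_finset_sup'
      intro k hk
      exact ((hGH k (Finset.mem_range.mp hk)).sub (hqk k)).abs
  · intro q hq y hy
    have hy1 : (-1:ℝ) < y := mem_Icc_gt hN hc hdet hb0 hstep hlast ha hbc y hy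
    have hHy1 : (-1:ℝ) < HLF a b c i y := HLF_gt hN hc hdet hb0 hstep hlast ha hbc i hi y hy1
    have hfgt := fixPt_gt hN hc hdet hb0 hstep hlast ha hbc i hi
    rw [hwe q y]
    constructor
    · intro h0
      have hs1 : (Finset.range N).sup' (Finset.nonempty_range_iff.mpr (by omega))
          (fun k => |GLF a b c k y - q k|) = 0 :=
        le_antisymm (le_trans (le_max_left _ _) h0.le) (sup'_abs_nonneg hN0 _)
      have hs2 : (Finset.range N).sup' (Finset.nonempty_range_iff.mpr (by omega))
          (fun k => |GLF a b c k (HLF a b c i y) - q k|) = 0 :=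
        le_antisymm (le_trans (le_max_right _ _) h0.le) (sup'_abs_nonneg hN0 _)
      have hA := (sup'_abs_eq_zero_iff hN0 _).mp hs1
      have hB := (sup'_abs_eq_zero_iff hN0 _).mp hs2
      have hGG : GLF a b c 0 (HLF a b c i y) = GLF a b c 0 y := by
        have h1 := hA 0 hN0
        have h2 := hB 0 hN0
        linarith
      have hfix : HLF a b c i y = y :=
        GLF_inj hN hc hdet hb0 hstep hlast ha hbc _ y hHy1 hy1 hGG
      have hyfix : y = fixPt a b c i :=
        HLF_fix_unique hN hc hdet hb0 hstep hlast ha hbc i hi y hy1 hfix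
      refine ⟨?_, hyfix⟩
      intro k hk
      rw [hpv]
      have := hA k hk
      rw [hyfix] at this
      linarith
    · rintro ⟨hqp, rfl⟩
      have hHfix := HLF_fix hN hc hdet hb0 hstep hlast ha hbc i hi
      rw [hHfix]
      have hz : (Finset.range N).sup' (Finset.nonempty_range_iff.mpr (by omega))
          (fun k => |GLF a b c k (fixPt a b c i) - q k|) = 0 := by
        rw [sup'_abs_eq_zero_iff hN0]
        intro k hk
        rw [hqp k hk, hpv]
        ring
      rw [hz]
      simp
end

section
/- Let {g_i}_{i∈𝓘_N} be a normalized LF system with a_0 < 1 and b_{N−1}+c_{N−1} > 0, so that Y = [α,β] is a compact subinterval of (−1,+∞). Let q ∈ 𝒫_N, let i* ∈ 𝓘_N, and suppose ε₁ > 0 satisfies W_{i*}(q,y) ≥ ε₁ for every y ∈ Y. Then for every y ∈ Y, s_N(G(y) | q) + s_N(G(H_{i*}(y)) | q) ≤ V(q; ε₁) < 0, where G(y) := (G_0(y),…,G_{N−1}(y)). -/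
open Set Filter Topology

/-- A strictly positive probability vector on `𝓘_N`. -/
def PosProbVec (N : ℕ) (p : ℕ → ℝ) : Prop :=
  (∀ i < N, 0 < p i) ∧ ∑ i ∈ Finset.range N, p i = 1

/-- The relative entropy `s_N(p|q) = Σ_i p i * log (q i / p i)` (`0 log(q/0) := 0`). -/
noncomputable def relEnt (N : ℕ) (p q : ℕ → ℝ) : ℝ :=
  ∑ i ∈ Finset.range N, if p i = 0 then 0 else p i * Real.log (q i / p i)

/-- The total distance `‖p − q‖ = Σ_i |p i − q i|`. -/
noncomputable def totalDist (N : ℕ) (p q : ℕ → ℝ) : ℝ :=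
  ∑ i ∈ Finset.range N, |p i - q i|

/-- `V(q;ε) = max { s_N(p|q) : p ∈ 𝒫_N-bar, ‖p − q‖ ≥ ε }`. -/
noncomputable def VEnt (N : ℕ) (q : ℕ → ℝ) (ε : ℝ) : ℝ :=
  sSup {v | ∃ p : ℕ → ℝ, ProbVec N p ∧ ε ≤ totalDist N p q ∧ v = relEnt N p q}

section aux
variable {N : ℕ} {a b c : ℕ → ℝ}

lemma lf_b_nonneg (hLF : NormLFSystem N a b c) : ∀ i < N, 0 ≤ b i := by
  obtain ⟨hc, hd, hb0, hstep, _⟩ := hLF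
  intro i hi
  induction i with
  | zero => simp [hb0]
  | succ n ih =>
    have hn : n < N := Nat.lt_of_succ_lt hi
    have hbn := ih hn
    have hcn := hc n hn
    have hdn := (hd n hn).1
    rw [← hstep n hi]
    have hab : 0 ≤ a n + b n := by nlinarith
    exact div_nonneg hab hcn.le

lemma lf_b_lt_D (hLF : NormLFSystem N a b c) {i : ℕ} (hi : i < N) :
    b i < (a i + b i) / (c i + 1) := by
  obtain ⟨hc, hd, _, _, _⟩ := hLF
  have hcn := hc i hi
  have hdn := (hd i hi).1
  rw [lt_div_iff₀ hcn]
  nlinarith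

lemma lf_b_lt_one (hLF : NormLFSystem N a b c) : ∀ i < N, b i < 1 := by
  have key : ∀ j, ∀ i, i < N → N = i + 1 + j → b i < 1 := by
    intro j
    induction j with
    | zero =>
      intro i hi hNe
      have h1 : N - 1 = i := by omega
      have h2 := lf_b_lt_D hLF hi
      have hlast := hLF.2.2.2.2
      rw [h1] at hlast
      rw [hlast] at h2
      exact h2
    | succ m ih =>
      intro i hi hNe
      have hi1 : i + 1 < N := by omega
      have := lf_b_lt_D hLF hi
      rw [hLF.2.2.2.1 i hi1] at this
      exact this.trans (ih (i+1) hi1 (by omega))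
  intro i hi
  exact key (N - 1 - i) i hi (by omega)

lemma lf_D_pos (hLF : NormLFSystem N a b c) {i : ℕ} (hi : i < N) :
    0 < (a i + b i) / (c i + 1) :=
  lt_of_le_of_lt (lf_b_nonneg hLF i hi) (lf_b_lt_D hLF hi)

lemma lf_D_le_one (hLF : NormLFSystem N a b c) {i : ℕ} (hi : i < N) :
    (a i + b i) / (c i + 1) ≤ 1 := by
  rcases lt_or_eq_of_le (Nat.succ_le_of_lt hi) with h | h
  · rw [hLF.2.2.2.1 i h]
    exact (lf_b_lt_one hLF (i+1) h).le
  · have h1 : N - 1 = i := by omega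
    have hlast := hLF.2.2.2.2
    rw [h1] at hlast
    rw [hlast]

lemma lf_den_pos (hLF : NormLFSystem N a b c) {i : ℕ} (hi : i < N) {y : ℝ} (hy : -1 < y) :
    0 < b i * y + 1 ∧ 0 < (a i + b i) * y + (c i + 1) := by
  have hb0 := lf_b_nonneg hLF i hi
  have hb1 := lf_b_lt_one hLF i hi
  have hD0 := lf_D_pos hLF hi
  have hD1 := lf_D_le_one hLF hi
  have hc := hLF.1 i hi
  constructor
  · nlinarith [mul_nonneg hb0 (by linarith : (0:ℝ) ≤ y + 1)]
  · have hDy : 0 < (a i + b i) / (c i + 1) * y + 1 := by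
      nlinarith [mul_pos hD0 (by linarith : (0:ℝ) < y + 1)]
    have hid : (a i + b i) * y + (c i + 1) = (c i + 1) * ((a i + b i) / (c i + 1) * y + 1) := by
      field_simp
    rw [hid]
    exact mul_pos hc hDy

end aux

section aux2
variable {N : ℕ} {a b c : ℕ → ℝ}

lemma lf_G_nonneg (hLF : NormLFSystem N a b c) {i : ℕ} (hi : i < N) {y : ℝ} (hy : -1 < y) :
    0 ≤ GLF a b c i y := by
  obtain ⟨h1, h2⟩ := lf_den_pos hLF hi hy
  have hd := (hLF.2.1 i hi).1
  exact div_nonneg (mul_nonneg hd.le (by linarith)) (mul_pos h1 h2).le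

lemma lf_G_sum (hN : 1 ≤ N) (hLF : NormLFSystem N a b c) {y : ℝ} (hy : -1 < y) :
    ∑ i ∈ Finset.range N, GLF a b c i y = 1 := by
  classical
  set ψ : ℝ → ℝ := fun t => t * (y + 1) / (t * y + 1) with hψ
  set f : ℕ → ℝ := fun i => if i < N then ψ (b i) else 1 with hf
  have key : ∀ i < N, GLF a b c i y = ψ ((a i + b i) / (c i + 1)) - ψ (b i) := by
    intro i hi
    obtain ⟨h1, h2⟩ := lf_den_pos hLF hi hy
    have hc := hLF.1 i hi
    have hDy : 0 < (a i + b i) / (c i + 1) * y + 1 := by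
      have hD0 := lf_D_pos hLF hi
      have hD1 := lf_D_le_one hLF hi
      nlinarith [mul_pos hD0 (by linarith : (0:ℝ) < y + 1)]
    simp only [hψ, GLF]
    rw [div_sub_div _ _ (by positivity) (by positivity), div_eq_div_iff (by positivity) (by positivity)]
    field_simp
    ring
  have key2 : ∀ i < N, GLF a b c i y = f (i + 1) - f i := by
    intro i hi
    rw [key i hi]
    have hfi : f i = ψ (b i) := if_pos hi
    rcases lt_or_eq_of_le (Nat.succ_le_of_lt hi) with h | h
    · have : f (i+1) = ψ (b (i+1)) := if_pos h
      rw [this, hfi, ← hLF.2.2.2.1 i h]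
    · have hfN : f (i+1) = 1 := if_neg (by omega)
      have hlast := hLF.2.2.2.2
      have h1 : N - 1 = i := by omega
      rw [h1] at hlast
      rw [hfN, hfi, hlast]
      have : ψ 1 = 1 := by
        simp only [hψ, one_mul]
        rw [div_self (by linarith)]
      rw [this]
  rw [Finset.sum_congr rfl (fun i hi => key2 i (Finset.mem_range.mp hi)),
    Finset.sum_range_sub f N]
  have hfN : f N = 1 := if_neg (lt_irrefl N)
  have hf0 : f 0 = 0 := by
    have h0 : (0:ℕ) < N := hN
    simp [hf, h0, hψ, hLF.2.2.1]
  rw [hfN, hf0, sub_zero]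

lemma lf_H_gt (hLF : NormLFSystem N a b c) {i : ℕ} (hi : i < N) {y : ℝ} (hy : -1 < y) :
    -1 < HLF a b c i y := by
  obtain ⟨h1, h2⟩ := lf_den_pos hLF hi hy
  have : HLF a b c i y + 1 = ((a i + b i) * y + (c i + 1)) / (b i * y + 1) := by
    unfold HLF
    rw [div_add_one h1.ne']
    ring
  have hpos : 0 < HLF a b c i y + 1 := this ▸ div_pos h2 h1
  linarith

lemma lf_fix0_gt (hN : 1 ≤ N) (hLF : NormLFSystem N a b c) (ha : a 0 < 1) :
    -1 < c 0 / (1 - a 0) := by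
  have h0 : 0 < N := hN
  have hc := hLF.1 0 h0
  have hd := hLF.2.1 0 h0
  have hb0 := hLF.2.2.1
  rw [hb0] at hd
  simp only [zero_mul, sub_zero] at hd
  have h1 : a 0 < c 0 + 1 := by
    have := hd.2
    rw [le_min_iff] at this
    nlinarith [this.2]
  rw [lt_div_iff₀ (by linarith : (0:ℝ) < 1 - a 0)]
  linarith

lemma lf_fixPt_gt (hN : 2 ≤ N) (hLF : NormLFSystem N a b c)
    (hbc : 0 < b (N - 1) + c (N - 1)) {i : ℕ} (h1i : 1 ≤ i) (hi : i < N) :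
    -1 < fixPt a b c i := by
  have hine : i ≠ 0 := by omega
  unfold fixPt
  rw [if_neg hine]
  have hbpos : 0 < b i := by
    have hstep := hLF.2.2.2.1 (i - 1) (by omega)
    have hii : i - 1 + 1 = i := by omega
    rw [hii] at hstep
    rw [← hstep]
    exact lf_D_pos hLF (by omega)
  have hsq : 1 - a i - 2 * b i < Real.sqrt ((1 - a i) ^ 2 + 4 * b i * c i) := by
    rcases lt_or_eq_of_le (Nat.succ_le_of_lt hi) with h | h
    · -- middle case : a i + b i < c i + 1
      have hab : a i + b i < c i + 1 := by
        have hstep := hLF.2.2.2.1 i h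
        have hb1 := lf_b_lt_one hLF (i+1) h
        have hc := hLF.1 i hi
        rw [div_eq_iff (by linarith)] at hstep
        nlinarith
      rcases le_or_gt 0 (1 - a i - 2 * b i) with hs | hs
      · rw [Real.lt_sqrt hs]
        nlinarith
      · exact lt_of_lt_of_le hs (Real.sqrt_nonneg _)
    · -- last case : i = N - 1
      have h1 : N - 1 = i := by omega
      have hlast := hLF.2.2.2.2
      rw [h1] at hlast hbc
      have hc := hLF.1 i hi
      rw [div_eq_iff (by linarith)] at hlast
      have : 1 - a i - 2 * b i < 0 := by nlinarith
      exact lt_of_lt_of_le this (Real.sqrt_nonneg _)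
  rw [lt_div_iff₀ (by linarith : (0:ℝ) < 2 * b i)]
  linarith

lemma lf_alpha_gt (hN : 2 ≤ N) (hLF : NormLFSystem N a b c) (ha : a 0 < 1)
    (hbc : 0 < b (N - 1) + c (N - 1)) : -1 < alphaLF N a b c := by
  unfold alphaLF
  set S := ({0} ∪ (if a 0 = 1 then (∅ : Set ℝ) else {c 0 / (1 - a 0)}) ∪
    {x | ∃ i, 1 ≤ i ∧ i < N ∧ x = fixPt a b c i}) with hS
  have hfin : S.Finite := by
    apply Set.Finite.union
    · apply Set.Finite.union (Set.finite_singleton _)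
      split_ifs
      · exact Set.finite_empty
      · exact Set.finite_singleton _
    · apply Set.Finite.subset ((Set.finite_Ico 1 N).image (fixPt a b c))
      rintro x ⟨i, h1, h2, rfl⟩
      exact ⟨i, ⟨h1, h2⟩, rfl⟩
  have hne : S.Nonempty := ⟨0, Or.inl (Or.inl rfl)⟩
  have hmem := hne.csInf_mem hfin
  rcases hmem with (h0 | hif) | ⟨i, h1, h2, heq⟩
  · rw [Set.mem_singleton_iff] at h0
    rw [h0]; norm_num
  · rw [if_neg (ne_of_lt ha)] at hif
    rw [Set.mem_singleton_iff] at hif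
    rw [hif]
    exact lf_fix0_gt (by omega) hLF ha
  · rw [heq]
    exact lf_fixPt_gt hN hLF hbc h1 h2

end aux2

section ent
variable {N : ℕ} {p q : ℕ → ℝ}

lemma relEnt_term_le (hq : ∀ i < N, 0 < q i) (hp : ∀ i < N, 0 ≤ p i) :
    ∀ i ∈ Finset.range N,
      (if p i = 0 then 0 else p i * Real.log (q i / p i)) ≤ q i - p i := by
  intro i hi
  rw [Finset.mem_range] at hi
  by_cases hpi : p i = 0
  · rw [if_pos hpi, hpi, sub_zero]
    exact (hq i hi).le
  · rw [if_neg hpi]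
    have hp0 : 0 < p i := lt_of_le_of_ne (hp i hi) (Ne.symm hpi)
    have hqp : 0 < q i / p i := div_pos (hq i hi) hp0
    have := Real.log_le_sub_one_of_pos hqp
    have h2 : p i * Real.log (q i / p i) ≤ p i * (q i / p i - 1) :=
      mul_le_mul_of_nonneg_left this hp0.le
    have h3 : p i * (q i / p i - 1) = q i - p i := by field_simp
    linarith

lemma gibbs (hq : PosProbVec N q) (hp : ProbVec N p) : relEnt N p q ≤ 0 := by
  unfold relEnt
  calc ∑ i ∈ Finset.range N, (if p i = 0 then 0 else p i * Real.log (q i / p i))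
      ≤ ∑ i ∈ Finset.range N, (q i - p i) :=
        Finset.sum_le_sum (relEnt_term_le hq.1 hp.1)
    _ = 0 := by rw [Finset.sum_sub_distrib, hq.2, hp.2, sub_self]

lemma gibbs_strict (hq : PosProbVec N q) (hp : ProbVec N p)
    (hne : ∃ j < N, p j ≠ q j) : relEnt N p q < 0 := by
  by_cases hex : ∃ i < N, p i ≠ 0 ∧ p i ≠ q i
  · obtain ⟨i, hi, hpi, hpq⟩ := hex
    have hstrict : (if p i = 0 then 0 else p i * Real.log (q i / p i)) < q i - p i := by
      rw [if_neg hpi]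
      have hp0 : 0 < p i := lt_of_le_of_ne (hp.1 i hi) (Ne.symm hpi)
      have hqp : 0 < q i / p i := div_pos (hq.1 i hi) hp0
      have hne1 : q i / p i ≠ 1 := by
        intro h
        rw [div_eq_one_iff_eq (ne_of_gt hp0)] at h
        exact hpq h.symm
      have := Real.log_lt_sub_one_of_pos hqp hne1
      have h2 : p i * Real.log (q i / p i) < p i * (q i / p i - 1) :=
        mul_lt_mul_of_pos_left this hp0
      have h3 : p i * (q i / p i - 1) = q i - p i := by field_simp
      linarith
    have hlt : relEnt N p q < ∑ i ∈ Finset.range N, (q i - p i) := by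
      unfold relEnt
      exact Finset.sum_lt_sum (relEnt_term_le hq.1 hp.1)
        ⟨i, Finset.mem_range.mpr hi, hstrict⟩
    rw [Finset.sum_sub_distrib, hq.2, hp.2, sub_self] at hlt
    exact hlt
  · exfalso
    push_neg at hex
    obtain ⟨j, hj, hpq⟩ := hne
    have hpj : p j = 0 := by
      by_contra h
      exact hpq (hex j hj h)
    have hle : ∀ i ∈ Finset.range N, p i ≤ q i := by
      intro i hi
      rw [Finset.mem_range] at hi
      by_cases h : p i = 0
      · rw [h]; exact (hq.1 i hi).le
      · rw [hex i hi h]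
    have hlt : p j < q j := by rw [hpj]; exact hq.1 j hj
    have := Finset.sum_lt_sum hle ⟨j, Finset.mem_range.mpr hj, hlt⟩
    rw [hp.2, hq.2] at this
    exact lt_irrefl 1 this

lemma relEnt_eq (hq : ∀ i < N, 0 < q i) :
    relEnt N p q =
      ∑ i ∈ Finset.range N, (p i * Real.log (q i) - p i * Real.log (p i)) := by
  unfold relEnt
  refine Finset.sum_congr rfl fun i hi => ?_
  rw [Finset.mem_range] at hi
  by_cases hpi : p i = 0
  · rw [if_pos hpi, hpi]; ring
  · rw [if_neg hpi, Real.log_div (ne_of_gt (hq i hi)) hpi, mul_sub]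

lemma exists_neg_bound {ε : ℝ} (hq : PosProbVec N q) (hε : 0 < ε)
    (hne : ∃ p : ℕ → ℝ, ProbVec N p ∧ ε ≤ totalDist N p q) :
    ∃ M < 0, ∀ p : ℕ → ℝ, ProbVec N p → ε ≤ totalDist N p q → relEnt N p q ≤ M := by
  classical
  set F : (Fin N → ℝ) → ℝ :=
    fun v => ∑ i : Fin N, (v i * Real.log (q i) - v i * Real.log (v i)) with hF
  set K : Set (Fin N → ℝ) :=
    {v | (∀ i, 0 ≤ v i) ∧ ∑ i, v i = 1 ∧ ε ≤ ∑ i, |v i - q i|} with hK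
  have hFcont : Continuous F := by
    apply continuous_finset_sum
    intro i _
    exact ((continuous_apply i).mul continuous_const).sub
      (Real.continuous_mul_log.comp (continuous_apply i))
  have hKclosed : IsClosed K := by
    have h1 : IsClosed {v : Fin N → ℝ | ∀ i, 0 ≤ v i} := by
      have : {v : Fin N → ℝ | ∀ i, 0 ≤ v i} = ⋂ i, {v | 0 ≤ v i} := by
        ext v; simp [Set.mem_iInter]
      rw [this]
      exact isClosed_iInter fun i => isClosed_le continuous_const (continuous_apply i)
    have h2 : IsClosed {v : Fin N → ℝ | ∑ i, v i = 1} :=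
      isClosed_eq (continuous_finset_sum _ fun i _ => continuous_apply i) continuous_const
    have h3 : IsClosed {v : Fin N → ℝ | ε ≤ ∑ i, |v i - q i|} :=
      isClosed_le continuous_const (continuous_finset_sum _ fun i _ =>
        ((continuous_apply i).sub continuous_const).abs)
    have : K = {v : Fin N → ℝ | ∀ i, 0 ≤ v i} ∩
        ({v | ∑ i, v i = 1} ∩ {v | ε ≤ ∑ i, |v i - q i|}) := by
      ext v; simp only [hK, Set.mem_setOf_eq, Set.mem_inter_iff]
    rw [this]
    exact h1.inter (h2.inter h3)
  have hKsub : K ⊆ Set.Icc (0 : Fin N → ℝ) 1 := by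
    rintro v ⟨hv0, hv1, -⟩
    refine ⟨fun i => hv0 i, fun i => ?_⟩
    calc v i ≤ ∑ j, v j := Finset.single_le_sum (fun j _ => hv0 j) (Finset.mem_univ i)
      _ = 1 := hv1
  have hKcomp : IsCompact K := IsCompact.of_isClosed_subset isCompact_Icc hKclosed hKsub
  have hKne : K.Nonempty := by
    obtain ⟨p, hp, hd⟩ := hne
    refine ⟨fun i => p i, fun i => hp.1 i i.isLt, ?_, ?_⟩
    · rw [Fin.sum_univ_eq_sum_range (fun i => p i) N]; exact hp.2
    · rw [Fin.sum_univ_eq_sum_range (fun i => |p i - q i|) N]; exact hd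
  obtain ⟨v₀, hv₀, hmax⟩ := hKcomp.exists_isMaxOn hKne hFcont.continuousOn
  have hFrel : ∀ v : Fin N → ℝ, (∀ i, 0 ≤ v i) →
      F v = relEnt N (fun k => if h : k < N then v ⟨k, h⟩ else 0) q := by
    intro v hv0
    rw [relEnt_eq hq.1, ← Fin.sum_univ_eq_sum_range
      (fun i => (if h : i < N then v ⟨i, h⟩ else 0) * Real.log (q i) -
        (if h : i < N then v ⟨i, h⟩ else 0) * Real.log ((if h : i < N then v ⟨i, h⟩ else 0))) N]
    refine Finset.sum_congr rfl fun i _ => ?_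
    rw [dif_pos i.isLt]
  set p₀ : ℕ → ℝ := fun k => if h : k < N then v₀ ⟨k, h⟩ else 0 with hp₀
  have hp₀prob : ProbVec N p₀ := by
    constructor
    · intro i hi
      rw [hp₀]; simp only [dif_pos hi]
      exact hv₀.1 _
    · rw [← Fin.sum_univ_eq_sum_range p₀ N]
      have : ∀ i : Fin N, p₀ i = v₀ i := fun i => by
        rw [hp₀]; simp only [dif_pos i.isLt]
      rw [Finset.sum_congr rfl fun i _ => this i]
      exact hv₀.2.1
  have hFv₀ : F v₀ = relEnt N p₀ q := hFrel v₀ hv₀.1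
  have hneg : F v₀ < 0 := by
    rw [hFv₀]
    apply gibbs_strict hq hp₀prob
    by_contra hcon
    push_neg at hcon
    have : (∑ i : Fin N, |v₀ i - q i|) = 0 := by
      apply Finset.sum_eq_zero
      intro i _
      have h1 : p₀ i = v₀ i := by rw [hp₀]; simp only [dif_pos i.isLt]
      rw [← h1, hcon i i.isLt, sub_self, abs_zero]
    have h4 := hv₀.2.2
    rw [this] at h4
    linarith
  refine ⟨F v₀, hneg, fun p hp hd => ?_⟩
  set w : Fin N → ℝ := fun i => p i with hw
  have hwK : w ∈ K := by
    refine ⟨fun i => hp.1 i i.isLt, ?_, ?_⟩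
    · rw [hw, Fin.sum_univ_eq_sum_range (fun i => p i) N]; exact hp.2
    · rw [hw, Fin.sum_univ_eq_sum_range (fun i => |p i - q i|) N]; exact hd
  have hFw : F w = relEnt N p q := by
    rw [relEnt_eq hq.1, hF, hw,
      ← Fin.sum_univ_eq_sum_range (fun i => p i * Real.log (q i) - p i * Real.log (p i)) N]
  rw [← hFw]
  exact hmax hwK

end ent

lemma sup_abs_le_totalDist {N : ℕ} (hN : 0 < N) (G q : ℕ → ℝ) {ε : ℝ}
    (h : ε ≤ sSup {v | ∃ k < N, v = |G k - q k|}) :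
    ε ≤ totalDist N G q := by
  set T := {v | ∃ k < N, v = |G k - q k|} with hT
  have hfin : T.Finite := by
    apply Set.Finite.subset ((Set.finite_Ico 0 N).image (fun k => |G k - q k|))
    rintro x ⟨k, hk, rfl⟩
    exact ⟨k, ⟨Nat.zero_le k, hk⟩, rfl⟩
  have hne : T.Nonempty := ⟨|G 0 - q 0|, 0, hN, rfl⟩
  obtain ⟨k, hk, heq⟩ := hne.csSup_mem hfin
  refine h.trans ?_
  rw [heq]
  unfold totalDist
  exact Finset.single_le_sum (f := fun i => |G i - q i|) (fun i _ => abs_nonneg _)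
    (Finset.mem_range.mpr hk)

/-- if `W_{i*}(q, y) ≥ ε₁` for all `y ∈ Y`, then for every `y ∈ Y`,
`s_N(G(y)|q) + s_N(G(H_{i*}(y))|q) ≤ V(q;ε₁) < 0`. -/
theorem stmt16 (N : ℕ) (hN : 2 ≤ N) (a b c : ℕ → ℝ) (hLF : NormLFSystem N a b c)
    (ha : a 0 < 1) (hbc : 0 < b (N - 1) + c (N - 1))
    (q : ℕ → ℝ) (hq : PosProbVec N q)
    (istar : ℕ) (histar : istar < N) (ε₁ : ℝ) (hε₁ : 0 < ε₁)
    (hW : ∀ y ∈ Set.Icc (alphaLF N a b c) (betaRealLF N a b c),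
      ε₁ ≤ WFun N a b c istar q y) :
    ∀ y ∈ Set.Icc (alphaLF N a b c) (betaRealLF N a b c),
      relEnt N (fun k => GLF a b c k y) q +
        relEnt N (fun k => GLF a b c k (HLF a b c istar y)) q ≤ VEnt N q ε₁ ∧
      VEnt N q ε₁ < 0 := by
  intro y hy
  have hαy : -1 < y := lt_of_lt_of_le (lf_alpha_gt hN hLF ha hbc) hy.1
  have hy2 : -1 < HLF a b c istar y := lf_H_gt hLF histar hαy
  have hN1 : 1 ≤ N := by omega
  have hG1 : ProbVec N (fun k => GLF a b c k y) :=
    ⟨fun i hi => lf_G_nonneg hLF hi hαy, lf_G_sum hN1 hLF hαy⟩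
  have hG2 : ProbVec N (fun k => GLF a b c k (HLF a b c istar y)) :=
    ⟨fun i hi => lf_G_nonneg hLF hi hy2, lf_G_sum hN1 hLF hy2⟩
  have hWy := hW y hy
  rw [WFun, le_max_iff] at hWy
  have hcase : ε₁ ≤ totalDist N (fun k => GLF a b c k y) q ∨
      ε₁ ≤ totalDist N (fun k => GLF a b c k (HLF a b c istar y)) q := by
    rcases hWy with h | h
    · exact Or.inl (sup_abs_le_totalDist (by omega) (fun k => GLF a b c k y) q h)
    · exact Or.inr (sup_abs_le_totalDist (by omega)
        (fun k => GLF a b c k (HLF a b c istar y)) q h)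
  obtain ⟨M, hM0, hMb⟩ := exists_neg_bound hq hε₁ (by
    rcases hcase with h | h
    exacts [⟨_, hG1, h⟩, ⟨_, hG2, h⟩])
  have hVle : VEnt N q ε₁ ≤ M := by
    apply csSup_le
    · rcases hcase with h | h
      exacts [⟨_, ⟨_, hG1, h, rfl⟩⟩, ⟨_, ⟨_, hG2, h, rfl⟩⟩]
    · rintro v ⟨p, hp, hd, rfl⟩
      exact hMb p hp hd
  have hVneg : VEnt N q ε₁ < 0 := lt_of_le_of_lt hVle hM0
  have hbdd : BddAbove {v | ∃ p : ℕ → ℝ, ProbVec N p ∧ ε₁ ≤ totalDist N p q ∧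
      v = relEnt N p q} := ⟨M, by rintro v ⟨p, hp, hd, rfl⟩; exact hMb p hp hd⟩
  refine ⟨?_, hVneg⟩
  rcases hcase with h | h
  · have h1 : relEnt N (fun k => GLF a b c k y) q ≤ VEnt N q ε₁ :=
      le_csSup hbdd ⟨_, hG1, h, rfl⟩
    have h2 := gibbs hq hG2
    linarith
  · have h1 : relEnt N (fun k => GLF a b c k (HLF a b c istar y)) q ≤ VEnt N q ε₁ :=
      le_csSup hbdd ⟨_, hG2, h, rfl⟩
    have h2 := gibbs hq hG1
    linarith
end

section
/- Let {g_i}_{i∈𝓘_N} be a normalized LF system with a_0 < 1 and b_{N−1}+c_{N−1} > 0, so that Y = [α,β] is a compact subinterval of (−1,+∞). Let ν₀ be a Borel probability measure on (𝓘_N)^ℕ such that for every n ≥ 1 and all i_1,…,i_n ∈ 𝓘_N, ν₀({z : z_j = i_j for 1 ≤ j ≤ n}) = G_{i_1}(0) · ∏_{j=2}^{n} G_{i_j}(H_{i_{j−1}}∘⋯∘H_{i_1}(0)). Let I ⊆ 𝓘_N be a nonempty set and c_I := inf_{y∈Y} Σ_{i∈I} G_i(y). Then for ν₀-almost every z ∈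 (𝓘_N)^ℕ, liminf_{n→∞} |{1 ≤ j ≤ n : z_j ∈ I}|/n ≥ c_I. -/
open Set Filter Topology

/-- The orbit `y_0 = 0`, `y_{j+1} = H_{i_j}(y_j)`, so that
`y_j = H_{i_{j-1}} ∘ ⋯ ∘ H_{i_0} (0)`. -/
noncomputable def yIter (a b c : ℕ → ℝ) (i : ℕ → ℕ) : ℕ → ℝ
  | 0 => 0
  | j + 1 => HLF a b c (i j) (yIter a b c i j)

namespace Stmt17Aux

/-- `b` extended by `b N = 1`. -/
noncomputable def B (N : ℕ) (b : ℕ → ℝ) (i : ℕ) : ℝ := if i = N then 1 else b i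

variable {N : ℕ} {a b c : ℕ → ℝ}

lemma B_succ_mul (hLF : NormLFSystem N a b c) {i : ℕ} (hi : i < N) :
    B N b (i + 1) * (c i + 1) = a i + b i := by
  obtain ⟨hc, hd, hb0, hbs, hlast⟩ := hLF
  have hcpos := hc i hi
  rcases eq_or_lt_of_le (Nat.succ_le_of_lt hi) with h | h
  · -- i + 1 = N
    have hiN : i = N - 1 := by omega
    subst hiN
    have h1 : B N b (N - 1 + 1) = 1 := by
      have : N - 1 + 1 = N := by omega
      simp [B, this]
    rw [h1, one_mul]
    have hc' : c (N-1) + 1 ≠ 0 := ne_of_gt hcpos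
    field_simp at hlast
    linarith [hlast]
  · have : B N b (i+1) = b (i+1) := by
      have : i + 1 ≠ N := by omega
      simp [B, this]
    rw [this, ← hbs i h]; field_simp

lemma B_zero (hN : 2 ≤ N) (hLF : NormLFSystem N a b c) : B N b 0 = 0 := by
  have : (0:ℕ) ≠ N := by omega
  simp [B, this, hLF.2.2.1]

lemma B_eq {i : ℕ} (hi : i < N) : B N b i = b i := by
  simp [B, Nat.ne_of_lt hi]

lemma B_succ_sub (hLF : NormLFSystem N a b c) {i : ℕ} (hi : i < N) :
    B N b (i+1) - B N b i = (a i - b i * c i) / (c i + 1) := by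
  have hc := hLF.1 i hi
  have h1 := B_succ_mul hLF hi
  rw [B_eq hi]
  field_simp
  nlinarith [h1]

lemma B_strictMono (hLF : NormLFSystem N a b c) {i : ℕ} (hi : i < N) :
    B N b i < B N b (i+1) := by
  have hc := hLF.1 i hi
  have hd := (hLF.2.1 i hi).1
  have := B_succ_sub hLF hi
  have : 0 < B N b (i+1) - B N b i := by rw [this]; positivity
  linarith

lemma B_mono (hLF : NormLFSystem N a b c) {i j : ℕ} (hij : i ≤ j) (hj : j ≤ N) :
    B N b i ≤ B N b j := by
  induction j with
  | zero => simp_all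
  | succ k ih =>
    rcases Nat.lt_or_ge i (k+1) with h | h
    · have h1 : B N b i ≤ B N b k := ih (by omega) (by omega)
      have h2 := B_strictMono hLF (show k < N by omega)
      linarith
    · have : i = k + 1 := by omega
      simp [this]

lemma B_N_eq (hN : 2 ≤ N) : B N b N = 1 := by simp [B]

lemma B_nonneg (hN : 2 ≤ N) (hLF : NormLFSystem N a b c) {i : ℕ} (hi : i ≤ N) :
    0 ≤ B N b i := by
  have := B_mono hLF (Nat.zero_le i) hi
  rw [B_zero hN hLF] at this; exact this

lemma B_le_one (hN : 2 ≤ N) (hLF : NormLFSystem N a b c) {i : ℕ} (hi : i ≤ N) :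
    B N b i ≤ 1 := by
  have := B_mono hLF hi le_rfl
  rwa [B_N_eq hN] at this

lemma b_nonneg (hN : 2 ≤ N) (hLF : NormLFSystem N a b c) {i : ℕ} (hi : i < N) :
    0 ≤ b i := by
  have := B_nonneg hN hLF (le_of_lt hi); rwa [B_eq hi] at this

lemma b_le_one (hN : 2 ≤ N) (hLF : NormLFSystem N a b c) {i : ℕ} (hi : i < N) :
    b i ≤ 1 := by
  have := B_le_one hN hLF (le_of_lt hi); rwa [B_eq hi] at this

lemma b_pos (hN : 2 ≤ N) (hLF : NormLFSystem N a b c) {i : ℕ} (h1 : 1 ≤ i) (hi : i < N) :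
    0 < b i := by
  have h := B_strictMono hLF (show 0 < N by omega)
  have h2 := B_mono hLF h1 (le_of_lt hi)
  rw [B_zero hN hLF] at h
  rw [B_eq hi] at h2
  linarith

lemma ab_le (hN : 2 ≤ N) (hLF : NormLFSystem N a b c) {i : ℕ} (hi : i < N) :
    a i + b i ≤ c i + 1 := by
  have h1 := B_succ_mul hLF hi
  have h2 := B_le_one hN hLF (Nat.succ_le_of_lt hi)
  have hc := hLF.1 i hi
  nlinarith

lemma ab_lt (hN : 2 ≤ N) (hLF : NormLFSystem N a b c) {i : ℕ} (hi : i + 1 < N) :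
    a i + b i < c i + 1 := by
  have h1 := B_succ_mul hLF (by omega : i < N)
  have h2 : B N b (i+1) < 1 := by
    have := B_mono hLF hi (le_refl N)
    have h3 := B_strictMono hLF (show N - 1 < N by omega)
    have hE : N - 1 + 1 = N := by omega
    rw [hE] at h3
    rw [B_N_eq hN] at *
    have := B_mono hLF (show i + 1 ≤ N - 1 by omega) (by omega : N - 1 ≤ N)
    linarith
  have hc := hLF.1 i (by omega)
  nlinarith

/-- positivity of linear factor -/
lemma lin_pos {t y : ℝ} (h0 : 0 ≤ t) (h1 : t ≤ 1) (hy : -1 < y) : 0 < t * y + 1 := by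
  rcases le_or_gt 0 y with h | h
  · nlinarith
  · nlinarith


section FixPt
variable (hN : 2 ≤ N) (hLF : NormLFSystem N a b c) (ha : a 0 < 1)
  (hbc : 0 < b (N - 1) + c (N - 1))

include hN hLF in
/-- discriminant nonneg for `1 ≤ i < N` -/
lemma disc_nonneg {i : ℕ} (h1 : 1 ≤ i) (hi : i < N) :
    (1 - a i - 2 * b i) ^ 2 ≤ (1 - a i) ^ 2 + 4 * b i * c i := by
  have hb := b_pos hN hLF h1 hi
  have hab := ab_le hN hLF hi
  nlinarith

include hN hLF in
lemma sqrt_disc_ge {i : ℕ} (h1 : 1 ≤ i) (hi : i < N) :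
    |1 - a i - 2 * b i| ≤ Real.sqrt ((1 - a i) ^ 2 + 4 * b i * c i) := by
  have h := disc_nonneg hN hLF h1 hi
  calc |1 - a i - 2 * b i| = Real.sqrt ((1 - a i - 2*b i)^2) := (Real.sqrt_sq_eq_abs _).symm
    _ ≤ _ := Real.sqrt_le_sqrt h

include hN hLF in
lemma sq_sqrt_disc {i : ℕ} (h1 : 1 ≤ i) (hi : i < N) :
    (Real.sqrt ((1 - a i) ^ 2 + 4 * b i * c i)) ^ 2 = (1 - a i) ^ 2 + 4 * b i * c i := by
  apply Real.sq_sqrt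
  have := disc_nonneg hN hLF h1 hi
  nlinarith [sq_nonneg (1 - a i - 2 * b i)]

include hN hLF ha in
lemma p0_gt : -1 < c 0 / (1 - a 0) := by
  have h01 : (0:ℕ) + 1 < N ∨ (0:ℕ) + 1 = N := by omega
  have hlt : a 0 + b 0 < c 0 + 1 ∨ (a 0 + b 0 = c 0 + 1 ∧ N = 1) := by
    rcases h01 with h | h
    · exact Or.inl (ab_lt hN hLF h)
    · omega
  have h : a 0 < c 0 + 1 := by
    rcases hlt with h | ⟨_, h⟩
    · rw [hLF.2.2.1] at h; linarith
    · omega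
  rw [neg_lt, ← neg_div]
  rw [div_lt_iff₀ (by linarith : (0:ℝ) < 1 - a 0)]
  linarith

include hN hLF hbc in
lemma fixPt_gt {i : ℕ} (h1 : 1 ≤ i) (hi : i < N) : -1 < fixPt a b c i := by
  have hb := b_pos hN hLF h1 hi
  have hi0 : i ≠ 0 := by omega
  rw [fixPt, if_neg hi0]
  rw [lt_div_iff₀ (by linarith : (0:ℝ) < 2 * b i)]
  have hs := sqrt_disc_ge hN hLF h1 hi
  rcases Nat.lt_or_ge (i+1) N with h | h
  · -- strict case
    have hab := ab_lt hN hLF h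
    have hlt : (1 - a i - 2*b i)^2 < (1 - a i)^2 + 4 * b i * c i := by nlinarith
    have : |1 - a i - 2 * b i| < Real.sqrt ((1 - a i) ^ 2 + 4 * b i * c i) := by
      calc |1 - a i - 2 * b i| = Real.sqrt ((1 - a i - 2*b i)^2) := (Real.sqrt_sq_eq_abs _).symm
        _ < _ := by
            apply Real.sqrt_lt_sqrt (sq_nonneg _) hlt
    have h2 : 1 - a i - 2 * b i < Real.sqrt ((1 - a i) ^ 2 + 4 * b i * c i) :=
      lt_of_le_of_lt (le_abs_self _) this
    nlinarith
  · -- i = N - 1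
    have hiN : i = N - 1 := by omega
    subst hiN
    have hab : a (N-1) + b (N-1) = c (N-1) + 1 := by
      have h1' := B_succ_mul hLF hi
      have hBN : B N b (N - 1 + 1) = 1 := by
        have : N - 1 + 1 = N := by omega
        simp [B, this]
      rw [hBN, one_mul] at h1'
      linarith
    have hDeq : (1 - a (N-1))^2 + 4 * b (N-1) * c (N-1) = (b (N-1) + c (N-1))^2 := by nlinarith
    rw [hDeq, Real.sqrt_sq (le_of_lt hbc)]
    nlinarith

include hN hLF in
lemma fixPt_root {i : ℕ} (h1 : 1 ≤ i) (hi : i < N) :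
    b i * (fixPt a b c i)^2 + (1 - a i) * fixPt a b c i - c i = 0 := by
  have hb := b_pos hN hLF h1 hi
  have hs := sq_sqrt_disc hN hLF h1 hi
  have hi0 : i ≠ 0 := by omega
  rw [fixPt, if_neg hi0]
  have hs' : Real.sqrt ((1 - a i) ^ 2 + b i * 4 * c i) ^ 2 = (1 - a i) ^ 2 + 4 * b i * c i := by
    rw [show b i * 4 * c i = 4 * b i * c i by ring]; exact hs
  field_simp
  nlinarith [hs, hs']

end FixPt

section AlphaBeta
variable (hN : 2 ≤ N) (hLF : NormLFSystem N a b c) (ha : a 0 < 1)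
  (hbc : 0 < b (N - 1) + c (N - 1))

/-- the generating set for α and β -/
def PSet (N : ℕ) (a b c : ℕ → ℝ) : Set ℝ :=
  {0} ∪ {c 0 / (1 - a 0)} ∪ {x | ∃ i, 1 ≤ i ∧ i < N ∧ x = fixPt a b c i}

include ha in
lemma alpha_eq : alphaLF N a b c = sInf (PSet N a b c) := by
  rw [alphaLF, PSet, if_neg (ne_of_lt ha)]

lemma beta_eq : betaRealLF N a b c = sSup (PSet N a b c) := rfl

lemma PSet_finite : (PSet N a b c).Finite := by
  apply Set.Finite.union; apply Set.Finite.union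
  · exact Set.finite_singleton _
  · exact Set.finite_singleton _
  · have : {x | ∃ i, 1 ≤ i ∧ i < N ∧ x = fixPt a b c i} ⊆
        fixPt a b c '' (Set.Icc 1 N) := by
      rintro x ⟨i, hi1, hiN, rfl⟩
      exact ⟨i, ⟨hi1, le_of_lt hiN⟩, rfl⟩
    exact Set.Finite.subset ((Set.finite_Icc 1 N).image _) this

lemma PSet_nonempty : (PSet N a b c).Nonempty := ⟨0, Or.inl (Or.inl rfl)⟩

include hN hLF ha hbc in
lemma PSet_gt : ∀ x ∈ PSet N a b c, -1 < x := by
  rintro x (⟨h | h⟩ | ⟨i, h1, hi, rfl⟩)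
  · simp only [Set.mem_singleton_iff] at h; subst h; norm_num
  · simp only [Set.mem_singleton_iff] at h; subst h; exact p0_gt hN hLF ha
  · exact fixPt_gt hN hLF hbc h1 hi

lemma alpha_le (hx : x ∈ PSet N a b c) : sInf (PSet N a b c) ≤ x :=
  csInf_le (PSet_finite (N := N) (a := a) (b := b) (c := c)).bddBelow hx

lemma le_beta (hx : x ∈ PSet N a b c) : x ≤ sSup (PSet N a b c) :=
  le_csSup (PSet_finite (N := N) (a := a) (b := b) (c := c)).bddAbove hx

include hN hLF ha hbc in
lemma alpha_gt : -1 < sInf (PSet N a b c) := by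
  have hmem := (PSet_nonempty (N := N) (a := a) (b := b) (c := c)).csInf_mem
    (PSet_finite (N := N) (a := a) (b := b) (c := c))
  exact PSet_gt hN hLF ha hbc _ hmem

lemma zero_mem_PSet : (0:ℝ) ∈ PSet N a b c := Or.inl (Or.inl rfl)

end AlphaBeta


section Invariance
variable (hN : 2 ≤ N) (hLF : NormLFSystem N a b c) (ha : a 0 < 1)
  (hbc : 0 < b (N - 1) + c (N - 1))

include hN hLF ha hbc in
lemma H_mem {i : ℕ} (hi : i < N) {y : ℝ}
    (hy : y ∈ Set.Icc (sInf (PSet N a b c)) (sSup (PSet N a b c))) :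
    HLF a b c i y ∈ Set.Icc (sInf (PSet N a b c)) (sSup (PSet N a b c)) := by
  set α := sInf (PSet N a b c) with hα
  set β := sSup (PSet N a b c) with hβ
  have hym1 : -1 < y := lt_of_lt_of_le (alpha_gt hN hLF ha hbc) hy.1
  rcases Nat.eq_zero_or_pos i with hi0 | hi1
  · -- affine case
    subst hi0
    have hb0 : b 0 = 0 := hLF.2.2.1
    have hH : HLF a b c 0 y = a 0 * y + c 0 := by
      rw [HLF, hb0]; simp
    have hp0mem : c 0 / (1 - a 0) ∈ PSet N a b c := Or.inl (Or.inr rfl)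
    have hαp : α ≤ c 0 / (1 - a 0) := alpha_le hp0mem
    have hpβ : c 0 / (1 - a 0) ≤ β := le_beta hp0mem
    have ha0pos : 0 < a 0 := by
      have := (hLF.2.1 0 (by omega)).1
      rw [hb0] at this; linarith
    have h1a : (0:ℝ) < 1 - a 0 := sub_pos.2 ha
    have hfix : a 0 * (c 0 / (1 - a 0)) + c 0 = c 0 / (1 - a 0) := by
      field_simp
      ring
    rw [hH]
    constructor
    · nlinarith [hy.1, mul_nonneg (le_of_lt ha0pos) (sub_nonneg.2 hy.1),
        mul_nonneg (le_of_lt h1a) (sub_nonneg.2 hαp)]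
    · nlinarith [mul_nonneg (le_of_lt ha0pos) (sub_nonneg.2 hy.2),
        mul_nonneg (le_of_lt h1a) (sub_nonneg.2 hpβ)]
  · -- Möbius case
    have hb := b_pos hN hLF hi1 hi
    have hble1 := b_le_one hN hLF hi
    have hδ := (hLF.2.1 i hi).1
    set p := fixPt a b c i with hp
    have hpmem : p ∈ PSet N a b c := Or.inr ⟨i, hi1, hi, rfl⟩
    have hαp : α ≤ p := alpha_le hpmem
    have hpβ : p ≤ β := le_beta hpmem
    have hpm1 : -1 < p := fixPt_gt hN hLF hbc hi1 hi
    have hroot : b i * p ^ 2 + (1 - a i) * p - c i = 0 := fixPt_root hN hLF hi1 hi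
    set s := Real.sqrt ((1 - a i) ^ 2 + 4 * b i * c i) with hs
    have hs2 : s ^ 2 = (1 - a i) ^ 2 + 4 * b i * c i := sq_sqrt_disc hN hLF hi1 hi
    have hsge : |1 - a i - 2 * b i| ≤ s := sqrt_disc_ge hN hLF hi1 hi
    set q : ℝ := (a i - 1 - s) / (2 * b i) with hq
    have hqle : q ≤ -1 := by
      rw [hq, div_le_iff₀ (by linarith : (0:ℝ) < 2 * b i)]
      have h1 := neg_le_abs (1 - a i - 2 * b i)
      linarith
    have hpeq : p = (a i - 1 + s) / (2 * b i) := by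
      rw [hp, fixPt, if_neg (by omega : i ≠ 0)]
    have hsum : b i * (p + q) = a i - 1 := by
      rw [hpeq, hq]; field_simp; ring
    have hprod : b i * (p * q) = - c i := by
      rw [hpeq, hq]; field_simp; nlinarith [hs2]
    have hkey : b i * y ^ 2 + (1 - a i) * y - c i = b i * ((y - p) * (y - q)) := by
      linear_combination y * hsum - hprod
    have hden : 0 < b i * y + 1 := lin_pos (le_of_lt hb) hble1 hym1
    have hdenp : 0 < b i * p + 1 := lin_pos (le_of_lt hb) hble1 hpm1
    have hHval : HLF a b c i y * (b i * y + 1) = a i * y + c i := by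
      rw [HLF]; exact div_mul_cancel₀ _ (ne_of_gt hden)
    have hHp : (HLF a b c i y - p) * ((b i * y + 1) * (b i * p + 1)) =
        (a i - b i * c i) * (y - p) := by
      linear_combination (b i * p + 1) * hHval + (-(b i * y) - 1) * hroot
    have hHy : (HLF a b c i y - y) * (b i * y + 1) = -(b i * ((y - p) * (y - q))) := by
      linear_combination hHval - hkey
    constructor
    · -- lower bound
      rcases le_or_gt p y with hcase | hcase
      · -- H y ≥ p ≥ α
        have h0 : 0 ≤ (HLF a b c i y - p) * ((b i * y + 1) * (b i * p + 1)) := by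
          rw [hHp]; exact mul_nonneg (le_of_lt hδ) (by linarith)
        have hx : 0 ≤ HLF a b c i y - p := by
          have := le_of_mul_le_mul_right
            (by simpa using h0 : 0 * ((b i * y + 1) * (b i * p + 1)) ≤
              (HLF a b c i y - p) * ((b i * y + 1) * (b i * p + 1)))
            (mul_pos hden hdenp)
          linarith
        linarith
      · -- y < p : H y ≥ y ≥ α
        have hyq : 0 < y - q := by linarith
        have h0 : 0 ≤ (HLF a b c i y - y) * (b i * y + 1) := by
          rw [hHy]
          have : b i * ((y - p) * (y - q)) ≤ 0 :=
            mul_nonpos_of_nonneg_of_nonpos (le_of_lt hb)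
              (mul_nonpos_of_nonpos_of_nonneg (by linarith) (le_of_lt hyq))
          linarith
        have hx : 0 ≤ HLF a b c i y - y := by
          have := le_of_mul_le_mul_right
            (by simpa using h0 : 0 * (b i * y + 1) ≤ (HLF a b c i y - y) * (b i * y + 1))
            hden
          linarith
        linarith [hy.1]
    · -- upper bound
      rcases le_or_gt y p with hcase | hcase
      · -- H y ≤ p ≤ β
        have h0 : (HLF a b c i y - p) * ((b i * y + 1) * (b i * p + 1)) ≤ 0 := by
          rw [hHp]; exact mul_nonpos_of_nonneg_of_nonpos (le_of_lt hδ) (by linarith)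
        have hx : HLF a b c i y - p ≤ 0 := by
          have := le_of_mul_le_mul_right
            (by simpa using h0 : (HLF a b c i y - p) * ((b i * y + 1) * (b i * p + 1)) ≤
              0 * ((b i * y + 1) * (b i * p + 1)))
            (mul_pos hden hdenp)
          linarith
        linarith
      · -- p < y : H y ≤ y ≤ β
        have hyq : 0 < y - q := by linarith
        have h0 : (HLF a b c i y - y) * (b i * y + 1) ≤ 0 := by
          rw [hHy]
          have : 0 ≤ b i * ((y - p) * (y - q)) :=
            mul_nonneg (le_of_lt hb) (mul_nonneg (by linarith) (le_of_lt hyq))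
          linarith
        have hx : HLF a b c i y - y ≤ 0 := by
          have := le_of_mul_le_mul_right
            (by simpa using h0 : (HLF a b c i y - y) * (b i * y + 1) ≤ 0 * (b i * y + 1))
            hden
          linarith
        linarith [hy.2]

include hN hLF ha hbc in
lemma yIter_mem (i : ℕ → ℕ) (hiN : ∀ j, i j < N) (n : ℕ) :
    yIter a b c i n ∈ Set.Icc (sInf (PSet N a b c)) (sSup (PSet N a b c)) := by
  induction n with
  | zero =>
    exact ⟨alpha_le zero_mem_PSet, le_beta zero_mem_PSet⟩
  | succ k ih =>
    exact H_mem hN hLF ha hbc (hiN k) ih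

include hN hLF ha hbc in
lemma G_nonneg {k : ℕ} (hk : k < N) {y : ℝ}
    (hy : y ∈ Set.Icc (sInf (PSet N a b c)) (sSup (PSet N a b c))) :
    0 ≤ GLF a b c k y := by
  have hym1 : -1 < y := lt_of_lt_of_le (alpha_gt hN hLF ha hbc) hy.1
  have hδ := (hLF.2.1 k hk).1
  have hc := hLF.1 k hk
  have hden1 : 0 < b k * y + 1 :=
    lin_pos (b_nonneg hN hLF hk) (b_le_one hN hLF hk) hym1
  have hB : (a k + b k) * y + (c k + 1) = (c k + 1) * (B N b (k+1) * y + 1) := by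
    have h := B_succ_mul hLF hk
    nlinarith [h]
  have hden2 : 0 < (a k + b k) * y + (c k + 1) := by
    rw [hB]
    exact mul_pos hc (lin_pos (B_nonneg hN hLF (Nat.succ_le_of_lt hk))
      (B_le_one hN hLF (Nat.succ_le_of_lt hk)) hym1)
  rw [GLF]
  apply div_nonneg
  · nlinarith
  · positivity

include hN hLF ha hbc in
lemma G_sum_one {y : ℝ}
    (hy : y ∈ Set.Icc (sInf (PSet N a b c)) (sSup (PSet N a b c))) :
    ∑ k ∈ Finset.range N, GLF a b c k y = 1 := by
  have hym1 : -1 < y := lt_of_lt_of_le (alpha_gt hN hLF ha hbc) hy.1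
  set f : ℕ → ℝ := fun k => B N b k * (y + 1) / (B N b k * y + 1) with hf
  have hstep : ∀ k ∈ Finset.range N, GLF a b c k y = f (k + 1) - f k := by
    intro k hk
    rw [Finset.mem_range] at hk
    have hc := hLF.1 k hk
    have hab := B_succ_mul hLF hk
    have hBk : B N b k = b k := B_eq hk
    have hden1 : 0 < b k * y + 1 :=
      lin_pos (b_nonneg hN hLF hk) (b_le_one hN hLF hk) hym1
    have hden2 : 0 < B N b (k+1) * y + 1 :=
      lin_pos (B_nonneg hN hLF (Nat.succ_le_of_lt hk))
        (B_le_one hN hLF (Nat.succ_le_of_lt hk)) hym1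
    have hδeq : a k - b k * c k = (c k + 1) * (B N b (k+1) - b k) := by
      linear_combination (-1 : ℝ) * hab
    have hB' : (a k + b k) * y + (c k + 1) = (c k + 1) * (B N b (k+1) * y + 1) := by
      linear_combination (-y) * hab
    simp only [hf]
    rw [GLF, hδeq, hB', hBk]
    field_simp
    ring
  rw [Finset.sum_congr rfl hstep, Finset.sum_range_sub f]
  have h0 : f 0 = 0 := by
    simp only [hf]
    rw [B_zero hN hLF]; simp
  have hNN : f N = 1 := by
    simp only [hf]
    rw [B_N_eq hN, one_mul, one_mul]
    exact div_self (by linarith)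
  rw [h0, hNN, sub_zero]

end Invariance

section Words

lemma yIter_congr {i i' : ℕ → ℕ} : ∀ {n : ℕ}, (∀ j < n, i j = i' j) →
    yIter a b c i n = yIter a b c i' n
  | 0, _ => rfl
  | (n+1), h => by
    show HLF a b c (i n) (yIter a b c i n) = HLF a b c (i' n) (yIter a b c i' n)
    rw [h n (Nat.lt_succ_self n), yIter_congr (fun j hj => h j (Nat.lt_succ_of_lt hj))]

/-- extend a word to a sequence -/
def extW {N n : ℕ} (i : Fin n → Fin N) : ℕ → ℕ :=
  fun j => if h : j < n then (i ⟨j, h⟩ : ℕ) else 0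

lemma extW_lt {n : ℕ} (hN : 0 < N) (i : Fin n → Fin N) (j : ℕ) : extW i j < N := by
  unfold extW
  split
  · exact (i _).isLt
  · exact hN

lemma extW_snoc_lt {n : ℕ} (p : Fin n → Fin N) (k : Fin N) {j : ℕ} (hj : j < n) :
    extW (Fin.snoc p k) j = extW p j := by
  have h : (@Fin.snoc n (fun _ => Fin N) p k ⟨j, Nat.lt_succ_of_lt hj⟩ : Fin N) = p ⟨j, hj⟩ := by
    have h1 : (⟨j, Nat.lt_succ_of_lt hj⟩ : Fin (n+1)) = Fin.castSucc ⟨j, hj⟩ := rfl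
    rw [h1, Fin.snoc_castSucc]
  unfold extW
  rw [dif_pos (Nat.lt_succ_of_lt hj), dif_pos hj, h]

lemma extW_snoc_last {n : ℕ} (p : Fin n → Fin N) (k : Fin N) :
    extW (Fin.snoc p k) n = (k : ℕ) := by
  have h : (@Fin.snoc n (fun _ => Fin N) p k ⟨n, Nat.lt_succ_self n⟩ : Fin N) = k := by
    have h1 : (⟨n, Nat.lt_succ_self n⟩ : Fin (n+1)) = Fin.last n := rfl
    rw [h1, Fin.snoc_last]
  unfold extW
  rw [dif_pos (Nat.lt_succ_self n), h]

/-- the snoc equivalence -/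
def snocEquiv (N n : ℕ) : ((Fin n → Fin N) × Fin N) ≃ (Fin (n+1) → Fin N) where
  toFun x := Fin.snoc x.1 x.2
  invFun i := (Fin.init i, i (Fin.last n))
  left_inv x := by simp
  right_inv i := by simp

variable (hN : 2 ≤ N) (hLF : NormLFSystem N a b c) (ha : a 0 < 1)
  (hbc : 0 < b (N - 1) + c (N - 1))

include hN hLF ha hbc in
lemma prod_snoc (w : ℕ → ℝ) {n : ℕ} (p : Fin n → Fin N) (k : Fin N) :
    ∏ j ∈ Finset.range (n+1),
        (GLF a b c (extW (Fin.snoc p k) j) (yIter a b c (extW (Fin.snoc p k)) j) *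
          w (extW (Fin.snoc p k) j)) =
      (∏ j ∈ Finset.range n, (GLF a b c (extW p j) (yIter a b c (extW p) j) * w (extW p j)))
        * (GLF a b c (k : ℕ) (yIter a b c (extW p) n) * w (k : ℕ)) := by
  rw [Finset.prod_range_succ]
  congr 1
  · apply Finset.prod_congr rfl
    intro j hj
    rw [Finset.mem_range] at hj
    rw [extW_snoc_lt p k hj,
      yIter_congr (fun j' hj' => extW_snoc_lt p k (lt_trans hj' hj))]
  · rw [extW_snoc_last p k, yIter_congr (fun j' hj' => extW_snoc_lt p k hj')]

include hN hLF ha hbc in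
lemma term_nonneg (w : ℕ → ℝ) (hw : ∀ k, 0 ≤ w k) {n : ℕ} (p : Fin n → Fin N) (j : ℕ) :
    0 ≤ GLF a b c (extW p j) (yIter a b c (extW p) j) * w (extW p j) :=
  mul_nonneg
    (G_nonneg hN hLF ha hbc (extW_lt (by omega) p j)
      (yIter_mem hN hLF ha hbc _ (extW_lt (by omega) p) j))
    (hw _)

include hN hLF ha hbc in
lemma wordSum_le (w : ℕ → ℝ) (hw : ∀ k, 0 ≤ w k) (ρ : ℝ) (hρ0 : 0 ≤ ρ)
    (hρ : ∀ y ∈ Set.Icc (sInf (PSet N a b c)) (sSup (PSet N a b c)),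
      ∑ k ∈ Finset.range N, GLF a b c k y * w k ≤ ρ) :
    ∀ n : ℕ, (∑ i : Fin n → Fin N, ∏ j ∈ Finset.range n,
        (GLF a b c (extW i j) (yIter a b c (extW i) j) * w (extW i j))) ≤ ρ ^ n := by
  intro n
  induction n with
  | zero => simp
  | succ n ih =>
    rw [← Equiv.sum_comp (snocEquiv N n), Fintype.sum_prod_type]
    have hstep : ∀ p : Fin n → Fin N,
        (∑ k : Fin N, ∏ j ∈ Finset.range (n+1),
          (GLF a b c (extW (snocEquiv N n (p, k)) j)
            (yIter a b c (extW (snocEquiv N n (p, k))) j) * w (extW (snocEquiv N n (p, k)) j)))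
        ≤ (∏ j ∈ Finset.range n,
            (GLF a b c (extW p j) (yIter a b c (extW p) j) * w (extW p j))) * ρ := by
      intro p
      have hmem := yIter_mem hN hLF ha hbc _ (extW_lt (by omega : 0 < N) p) n
      calc (∑ k : Fin N, ∏ j ∈ Finset.range (n+1),
          (GLF a b c (extW (snocEquiv N n (p, k)) j)
            (yIter a b c (extW (snocEquiv N n (p, k))) j) * w (extW (snocEquiv N n (p, k)) j)))
          = (∏ j ∈ Finset.range n,
              (GLF a b c (extW p j) (yIter a b c (extW p) j) * w (extW p j))) *
            (∑ k : Fin N, GLF a b c (k : ℕ) (yIter a b c (extW p) n) * w (k : ℕ)) := by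
            rw [Finset.mul_sum]
            apply Finset.sum_congr rfl
            intro k _
            exact prod_snoc hN hLF ha hbc w p k
        _ ≤ _ := by
            apply mul_le_mul_of_nonneg_left _
              (Finset.prod_nonneg (fun j _ => term_nonneg hN hLF ha hbc w hw p j))
            rw [Fin.sum_univ_eq_sum_range (fun m => GLF a b c m (yIter a b c (extW p) n) * w m) N]
            exact hρ _ hmem
    calc (∑ p : Fin n → Fin N, ∑ k : Fin N, _) ≤
        ∑ p : Fin n → Fin N, (∏ j ∈ Finset.range n,
          (GLF a b c (extW p j) (yIter a b c (extW p) j) * w (extW p j))) * ρ :=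
          Finset.sum_le_sum (fun p _ => hstep p)
      _ = (∑ p : Fin n → Fin N, ∏ j ∈ Finset.range n,
          (GLF a b c (extW p j) (yIter a b c (extW p) j) * w (extW p j))) * ρ := by
          rw [Finset.sum_mul]
      _ ≤ ρ ^ n * ρ := mul_le_mul_of_nonneg_right ih hρ0
      _ = ρ ^ (n+1) := (pow_succ ρ n).symm

include hN hLF ha hbc in
lemma wordSum_one : ∀ n : ℕ, (∑ i : Fin n → Fin N, ∏ j ∈ Finset.range n,
    GLF a b c (extW i j) (yIter a b c (extW i) j)) = 1 := by
  intro n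
  induction n with
  | zero => simp
  | succ n ih =>
    rw [← Equiv.sum_comp (snocEquiv N n), Fintype.sum_prod_type]
    have hstep : ∀ p : Fin n → Fin N,
        (∑ k : Fin N, ∏ j ∈ Finset.range (n+1),
          GLF a b c (extW (snocEquiv N n (p, k)) j) (yIter a b c (extW (snocEquiv N n (p, k))) j))
        = ∏ j ∈ Finset.range n, GLF a b c (extW p j) (yIter a b c (extW p) j) := by
      intro p
      have hmem := yIter_mem hN hLF ha hbc _ (extW_lt (by omega : 0 < N) p) n
      have h1 : ∀ k : Fin N, (∏ j ∈ Finset.range (n+1),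
          GLF a b c (extW (snocEquiv N n (p, k)) j) (yIter a b c (extW (snocEquiv N n (p, k))) j))
          = (∏ j ∈ Finset.range n, GLF a b c (extW p j) (yIter a b c (extW p) j)) *
            GLF a b c (k : ℕ) (yIter a b c (extW p) n) := by
        intro k
        have := prod_snoc hN hLF ha hbc (fun _ => 1) p k
        simpa [snocEquiv] using this
      rw [Finset.sum_congr rfl (fun k _ => h1 k), ← Finset.mul_sum]
      rw [Fin.sum_univ_eq_sum_range (fun m => GLF a b c m (yIter a b c (extW p) n)) N]
      rw [G_sum_one hN hLF ha hbc hmem, mul_one]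
    rw [Finset.sum_congr rfl (fun p _ => hstep p)]
    exact ih

end Words

end Stmt17Aux

set_option maxHeartbeats 1000000 in
open Stmt17Aux in
open MeasureTheory in
/-- frequency of symbols, via Azuma's inequality: if `ν` is the
Markov-type measure on `(𝓘_N)^ℕ` with cylinder probabilities
`ν([i_1,…,i_n]) = G_{i_1}(0) ∏_{j=2}^n G_{i_j}(H_{i_{j-1}} ∘ ⋯ ∘ H_{i_1}(0))`,
and `c_I := inf_{y ∈ Y} Σ_{i ∈ I} G_i(y)`, then `ν`-a.s. the lower asymptotic
frequency of indices `j` with `z_j ∈ I` is at least `c_I`. -/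
theorem stmt17 (N : ℕ) (hN : 2 ≤ N) (a b c : ℕ → ℝ) (hLF : NormLFSystem N a b c)
    (ha : a 0 < 1) (hbc : 0 < b (N - 1) + c (N - 1))
    (ν : Measure (ℕ → ℕ)) [IsProbabilityMeasure ν]
    (hcyl : ∀ n : ℕ, 0 < n → ∀ i : ℕ → ℕ, (∀ j < n, i j < N) →
      ν {z | ∀ j < n, z j = i j} =
        ENNReal.ofReal (∏ j ∈ Finset.range n, GLF a b c (i j) (yIter a b c i j)))
    (I : Finset ℕ) (hI : I.Nonempty) (hIN : ∀ i ∈ I, i < N) :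
    ∀ᵐ z ∂ν,
      sInf {v : ℝ | ∃ y ∈ Set.Icc (alphaLF N a b c) (betaRealLF N a b c),
          v = ∑ i ∈ I, GLF a b c i y} ≤
        Filter.atTop.liminf (fun n : ℕ =>
          (((Finset.range n).filter (fun j => z j ∈ I)).card : ℝ) / n) := by
  classical
  have hα : alphaLF N a b c = sInf (PSet N a b c) := alpha_eq ha
  have hβ : betaRealLF N a b c = sSup (PSet N a b c) := beta_eq
  set Y := Set.Icc (sInf (PSet N a b c)) (sSup (PSet N a b c)) with hY
  have hIccY : Set.Icc (alphaLF N a b c) (betaRealLF N a b c) = Y := by rw [hα, hβ]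
  set S := {v : ℝ | ∃ y ∈ Set.Icc (alphaLF N a b c) (betaRealLF N a b c),
      v = ∑ i ∈ I, GLF a b c i y} with hS
  set c₀ := sInf S with hc₀
  have hY0 : (0:ℝ) ∈ Y := ⟨alpha_le zero_mem_PSet, le_beta zero_mem_PSet⟩
  have hSnonneg : ∀ v ∈ S, 0 ≤ v := by
    rintro v ⟨y, hy, rfl⟩
    rw [hIccY] at hy
    exact Finset.sum_nonneg (fun i hi => G_nonneg hN hLF ha hbc (hIN i hi) hy)
  have hc00 : 0 ≤ c₀ := Real.sInf_nonneg hSnonneg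
  have hbdd : BddBelow S := ⟨0, fun v hv => hSnonneg v hv⟩
  have hcle : ∀ y ∈ Y, c₀ ≤ ∑ i ∈ I, GLF a b c i y := by
    intro y hy
    exact csInf_le hbdd ⟨y, hIccY ▸ hy, rfl⟩
  have hIsub : I ⊆ Finset.range N := fun i hi => Finset.mem_range.mpr (hIN i hi)
  have hc01 : c₀ ≤ 1 := by
    have h1 : c₀ ≤ ∑ i ∈ I, GLF a b c i 0 := hcle 0 hY0
    have h2 : ∑ i ∈ I, GLF a b c i 0 ≤ ∑ i ∈ Finset.range N, GLF a b c i 0 :=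
      Finset.sum_le_sum_of_subset_of_nonneg hIsub
        (fun i hi _ => G_nonneg hN hLF ha hbc (Finset.mem_range.mp hi) hY0)
    rw [G_sum_one hN hLF ha hbc hY0] at h2
    linarith
  -- main per-ε claim
  have key : ∀ k : ℕ, ∀ᵐ z ∂ν, ∀ᶠ n in Filter.atTop,
      ¬ ((((Finset.range n).filter (fun j => z j ∈ I)).card : ℝ) ≤
        (c₀ - 1/((k:ℝ)+1)) * n) := by
    intro k
    set ε : ℝ := 1/((k:ℝ)+1) with hε_def
    have hε : 0 < ε := by positivity
    set w : ℕ → ℝ := fun m => if m ∈ I then Real.exp (-ε) else 1 with hw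
    have hw0 : ∀ m, 0 ≤ w m := by
      intro m; rw [hw]; dsimp only; split
      · exact le_of_lt (Real.exp_pos _)
      · exact zero_le_one
    have hexplt1 : Real.exp (-ε) < 1 := by
      rw [show (1:ℝ) = Real.exp 0 by simp]
      exact Real.exp_lt_exp.mpr (by linarith)
    set ρ : ℝ := 1 - (1 - Real.exp (-ε)) * c₀ with hρ_def
    have hρ0 : 0 < ρ := by nlinarith [Real.exp_pos (-ε)]
    have hρle : ∀ y ∈ Y, ∑ m ∈ Finset.range N, GLF a b c m y * w m ≤ ρ := by
      intro y hy
      have hsplit : ∀ m ∈ Finset.range N, GLF a b c m y * w m =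
          GLF a b c m y - (1 - Real.exp (-ε)) * (if m ∈ I then GLF a b c m y else 0) := by
        intro m _
        rw [hw]; dsimp only; split <;> ring
      rw [Finset.sum_congr rfl hsplit, Finset.sum_sub_distrib, ← Finset.mul_sum]
      rw [G_sum_one hN hLF ha hbc hy]
      have hfilter : ∑ m ∈ Finset.range N, (if m ∈ I then GLF a b c m y else 0) =
          ∑ i ∈ I, GLF a b c i y := by
        rw [Finset.sum_ite_mem, Finset.inter_eq_right.mpr hIsub]
      rw [hfilter]
      have h1 := hcle y hy
      nlinarith [sub_nonneg.2 (le_of_lt hexplt1)]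
    set r : ℝ := Real.exp (ε * (c₀ - ε)) * ρ with hr_def
    have hr0 : 0 ≤ r := mul_nonneg (le_of_lt (Real.exp_pos _)) (le_of_lt hρ0)
    have hr1 : r < 1 := by
      have hmul : Real.exp ε * Real.exp (-ε) = 1 := by rw [← Real.exp_add]; simp
      have hA : (1 + ε) * Real.exp (-ε) ≤ 1 := by
        have h := Real.add_one_le_exp ε
        nlinarith [Real.exp_pos (-ε)]
      have hB : 1 - Real.exp (-ε) < ε := by
        have h := Real.add_one_lt_exp (show -ε ≠ 0 by linarith)
        linarith
      have h1e : 0 ≤ 1 - Real.exp (-ε) := by linarith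
      have hm1 : ε * Real.exp (-ε) ≤ 1 - Real.exp (-ε) := by nlinarith
      have hm2 : ρ ≤ 1 - (ε * Real.exp (-ε)) * c₀ := by
        rw [hρ_def]; nlinarith
      have hm3 : c₀ * (1 - Real.exp (-ε)) < ε := by nlinarith
      have hm4 : 1 - (ε * Real.exp (-ε)) * c₀ < 1 - ε*c₀ + ε*ε := by nlinarith
      have hm5 : 1 - ε*c₀ + ε*ε ≤ Real.exp (-(ε*(c₀-ε))) := by
        have h := Real.add_one_le_exp (-(ε*(c₀-ε)))
        nlinarith
      have hρlt : ρ < Real.exp (-(ε*(c₀-ε))) := by linarith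
      calc r = Real.exp (ε*(c₀-ε)) * ρ := hr_def
        _ < Real.exp (ε*(c₀-ε)) * Real.exp (-(ε*(c₀-ε))) :=
            mul_lt_mul_of_pos_left hρlt (Real.exp_pos _)
        _ = 1 := by rw [← Real.exp_add]; simp
    set A : ℕ → Set (ℕ → ℕ) := fun n =>
      {z | (((Finset.range n).filter (fun j => z j ∈ I)).card : ℝ) ≤ (c₀ - ε) * n}
      with hA_def
    have hbound : ∀ n, ν (A n) ≤ ENNReal.ofReal (r ^ n) := by
      intro n
      rcases Nat.eq_zero_or_pos n with hn0 | hn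
      · subst hn0
        rw [pow_zero, ENNReal.ofReal_one]
        exact prob_le_one
      · set C : (Fin n → Fin N) → Set (ℕ → ℕ) := fun i => {z | ∀ j < n, z j = extW i j}
          with hC
        have hCmeas : ∀ i, MeasurableSet (C i) := by
          intro i
          have hCi : C i = ⋂ (j : ℕ) (_ : j < n), (fun z : ℕ → ℕ => z j) ⁻¹' {extW i j} := by
            ext z; simp [hC]
          rw [hCi]
          exact MeasurableSet.iInter (fun j => MeasurableSet.iInter
            (fun _ => measurable_pi_apply j (measurableSet_singleton _)))
        have hCmeasure : ∀ i : Fin n → Fin N, ν (C i) =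
            ENNReal.ofReal (∏ j ∈ Finset.range n,
              GLF a b c (extW i j) (yIter a b c (extW i) j)) := by
          intro i
          exact hcyl n hn (extW i) (fun j _ => extW_lt (by omega) i j)
        have hdisj : Set.PairwiseDisjoint (↑(Finset.univ : Finset (Fin n → Fin N))) C := by
          intro i _ i' _ hne
          refine Set.disjoint_left.mpr ?_
          intro z hz hz'
          apply hne
          funext j
          have h1 : z (j : ℕ) = extW i (j : ℕ) := hz (j : ℕ) j.isLt
          have h2 : z (j : ℕ) = extW i' (j : ℕ) := hz' (j : ℕ) j.isLt
          have h3 : extW i (j : ℕ) = (i j : ℕ) := by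
            unfold extW; rw [dif_pos j.isLt]
          have h4 : extW i' (j : ℕ) = (i' j : ℕ) := by
            unfold extW; rw [dif_pos j.isLt]
          apply Fin.val_injective
          rw [← h3, ← h4, ← h1, ← h2]
        have hprodnn : ∀ i : Fin n → Fin N,
            0 ≤ ∏ j ∈ Finset.range n, GLF a b c (extW i j) (yIter a b c (extW i) j) := by
          intro i
          apply Finset.prod_nonneg
          intro j _
          exact G_nonneg hN hLF ha hbc (extW_lt (by omega) i j)
            (yIter_mem hN hLF ha hbc _ (extW_lt (by omega) i) j)
        have hUmeas : MeasurableSet (⋃ i ∈ (Finset.univ : Finset (Fin n → Fin N)), C i) :=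
          (Finset.univ : Finset (Fin n → Fin N)).measurableSet_biUnion (fun i _ => hCmeas i)
        have hU : ν (⋃ i ∈ (Finset.univ : Finset (Fin n → Fin N)), C i) = 1 := by
          rw [measure_biUnion_finset hdisj (fun i _ => hCmeas i)]
          rw [Finset.sum_congr rfl (fun i _ => hCmeasure i)]
          rw [← ENNReal.ofReal_sum_of_nonneg (fun i _ => hprodnn i)]
          rw [wordSum_one hN hLF ha hbc n, ENNReal.ofReal_one]
        have hcompl : ν ((⋃ i ∈ (Finset.univ : Finset (Fin n → Fin N)), C i)ᶜ) = 0 := by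
          rw [measure_compl hUmeas (measure_ne_top ν _), hU, measure_univ, tsub_self]
        set bad : Finset (Fin n → Fin N) := Finset.univ.filter (fun i =>
          (((Finset.range n).filter (fun j => extW i j ∈ I)).card : ℝ) ≤ (c₀ - ε) * n)
          with hbad
        have hcover : A n ⊆ (⋃ i ∈ bad, C i) ∪
            (⋃ i ∈ (Finset.univ : Finset (Fin n → Fin N)), C i)ᶜ := by
          intro z hz
          by_cases hzU : z ∈ ⋃ i ∈ (Finset.univ : Finset (Fin n → Fin N)), C i
          · left
            simp only [Finset.mem_univ, Set.iUnion_true, Set.mem_iUnion] at hzU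
            obtain ⟨i, hzi⟩ := hzU
            have hzi' : ∀ j < n, z j = extW i j := hzi
            have hfeq : (Finset.range n).filter (fun j => z j ∈ I) =
                (Finset.range n).filter (fun j => extW i j ∈ I) := by
              apply Finset.filter_congr
              intro j hj
              rw [hzi' j (Finset.mem_range.mp hj)]
            have hzA : (((Finset.range n).filter (fun j => z j ∈ I)).card : ℝ) ≤
                (c₀ - ε) * n := hz
            have hmem : i ∈ bad := by
              rw [hbad, Finset.mem_filter]
              exact ⟨Finset.mem_univ _, by rw [← hfeq]; exact hzA⟩
            exact Set.mem_biUnion hmem hzi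
          · right; exact hzU
        have hrealineq : ∑ i ∈ bad, ∏ j ∈ Finset.range n,
            GLF a b c (extW i j) (yIter a b c (extW i) j) ≤ r ^ n := by
          have hGw_nn : ∀ (i : Fin n → Fin N) (j : ℕ),
              0 ≤ GLF a b c (extW i j) (yIter a b c (extW i) j) * w (extW i j) :=
            fun i j => term_nonneg hN hLF ha hbc w hw0 i j
          have hterm : ∀ i ∈ bad, ∏ j ∈ Finset.range n,
              GLF a b c (extW i j) (yIter a b c (extW i) j) ≤
              Real.exp (ε * (c₀ - ε)) ^ n * ∏ j ∈ Finset.range n,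
                (GLF a b c (extW i j) (yIter a b c (extW i) j) * w (extW i j)) := by
            intro i hi
            rw [hbad, Finset.mem_filter] at hi
            set m : ℕ := ((Finset.range n).filter (fun j => extW i j ∈ I)).card with hm
            have hprodw : ∏ j ∈ Finset.range n, w (extW i j) = Real.exp (-ε) ^ m := by
              have : ∀ j ∈ Finset.range n, w (extW i j) =
                  (if extW i j ∈ I then Real.exp (-ε) else 1) := by
                intro j _; rw [hw]
              rw [Finset.prod_congr rfl this, Finset.prod_ite, Finset.prod_const,
                Finset.prod_const, one_pow, mul_one]
            have hsplitprod : ∏ j ∈ Finset.range n,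
                (GLF a b c (extW i j) (yIter a b c (extW i) j) * w (extW i j)) =
                (∏ j ∈ Finset.range n, GLF a b c (extW i j) (yIter a b c (extW i) j)) *
                  Real.exp (-ε) ^ m := by
              rw [Finset.prod_mul_distrib, hprodw]
            rw [hsplitprod]
            have hineq : Real.exp (ε * m) ≤ Real.exp (ε * (c₀ - ε)) ^ n := by
              rw [← Real.exp_nat_mul]
              apply Real.exp_le_exp.mpr
              have := hi.2
              have hεm : (m:ℝ) ≤ (c₀ - ε) * n := this
              calc ε * m ≤ ε * ((c₀ - ε) * n) := by nlinarith
                _ = (n:ℝ) * (ε * (c₀ - ε)) := by ring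
            have hexppos : (0:ℝ) < Real.exp (-ε) ^ m := pow_pos (Real.exp_pos _) m
            have hexpinv : Real.exp (-ε) ^ m * Real.exp (ε * m) = 1 := by
              rw [← Real.exp_nat_mul, ← Real.exp_add,
                show (m:ℝ) * (-ε) + ε * (m:ℝ) = 0 by ring, Real.exp_zero]
            have hPnn := hprodnn i
            set P : ℝ := ∏ j ∈ Finset.range n,
              GLF a b c (extW i j) (yIter a b c (extW i) j) with hP
            calc P = (P * Real.exp (-ε) ^ m) * Real.exp (ε * m) := by
                  rw [mul_assoc, hexpinv, mul_one]
              _ ≤ (P * Real.exp (-ε) ^ m) * Real.exp (ε * (c₀ - ε)) ^ n :=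
                  mul_le_mul_of_nonneg_left hineq
                    (mul_nonneg hPnn (le_of_lt hexppos))
              _ = Real.exp (ε * (c₀ - ε)) ^ n * (P * Real.exp (-ε) ^ m) := mul_comm _ _
          calc ∑ i ∈ bad, ∏ j ∈ Finset.range n,
                GLF a b c (extW i j) (yIter a b c (extW i) j)
              ≤ ∑ i ∈ bad, Real.exp (ε * (c₀ - ε)) ^ n * ∏ j ∈ Finset.range n,
                (GLF a b c (extW i j) (yIter a b c (extW i) j) * w (extW i j)) :=
                Finset.sum_le_sum hterm
            _ = Real.exp (ε * (c₀ - ε)) ^ n * ∑ i ∈ bad, ∏ j ∈ Finset.range n,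
                (GLF a b c (extW i j) (yIter a b c (extW i) j) * w (extW i j)) := by
                rw [Finset.mul_sum]
            _ ≤ Real.exp (ε * (c₀ - ε)) ^ n * ∑ i : Fin n → Fin N, ∏ j ∈ Finset.range n,
                (GLF a b c (extW i j) (yIter a b c (extW i) j) * w (extW i j)) := by
                apply mul_le_mul_of_nonneg_left _ (pow_nonneg (le_of_lt (Real.exp_pos _)) n)
                apply Finset.sum_le_sum_of_subset_of_nonneg (Finset.subset_univ _)
                intro i _ _
                exact Finset.prod_nonneg (fun j _ => hGw_nn i j)
            _ ≤ Real.exp (ε * (c₀ - ε)) ^ n * ρ ^ n := by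
                apply mul_le_mul_of_nonneg_left _ (pow_nonneg (le_of_lt (Real.exp_pos _)) n)
                exact wordSum_le hN hLF ha hbc w hw0 ρ (le_of_lt hρ0) hρle n
            _ = r ^ n := by rw [hr_def, mul_pow]
        calc ν (A n) ≤ ν ((⋃ i ∈ bad, C i) ∪
              (⋃ i ∈ (Finset.univ : Finset (Fin n → Fin N)), C i)ᶜ) := measure_mono hcover
          _ ≤ ν (⋃ i ∈ bad, C i) +
              ν ((⋃ i ∈ (Finset.univ : Finset (Fin n → Fin N)), C i)ᶜ) := measure_union_le _ _
          _ = ν (⋃ i ∈ bad, C i) := by rw [hcompl, add_zero]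
          _ ≤ ∑ i ∈ bad, ν (C i) := measure_biUnion_finset_le _ _
          _ = ENNReal.ofReal (∑ i ∈ bad, ∏ j ∈ Finset.range n,
              GLF a b c (extW i j) (yIter a b c (extW i) j)) := by
              rw [Finset.sum_congr rfl (fun i _ => hCmeasure i)]
              rw [← ENNReal.ofReal_sum_of_nonneg (fun i _ => hprodnn i)]
          _ ≤ ENNReal.ofReal (r ^ n) := ENNReal.ofReal_le_ofReal hrealineq
    have hsum : (∑' n, ν (A n)) ≠ ⊤ := by
      have h1 : (∑' n, ν (A n)) ≤ ∑' n, ENNReal.ofReal (r ^ n) :=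
        ENNReal.tsum_le_tsum hbound
      have h2 : ∀ n : ℕ, ENNReal.ofReal (r ^ n) = ENNReal.ofReal r ^ n :=
        fun n => ENNReal.ofReal_pow hr0 n
      have h3 : (∑' n, ENNReal.ofReal (r ^ n)) = (1 - ENNReal.ofReal r)⁻¹ := by
        rw [tsum_congr h2, ENNReal.tsum_geometric]
      have hq1 : ENNReal.ofReal r < 1 := by
        rw [← ENNReal.ofReal_one]
        exact ENNReal.ofReal_lt_ofReal_iff_of_nonneg hr0 |>.mpr hr1
      have h4 : (1 - ENNReal.ofReal r)⁻¹ ≠ ⊤ := by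
        rw [ENNReal.inv_ne_top]
        intro h
        rw [tsub_eq_zero_iff_le] at h
        exact absurd h (not_le.mpr hq1)
      exact ne_top_of_le_ne_top (h3 ▸ h4) h1
    have hae := MeasureTheory.ae_eventually_notMem hsum
    filter_upwards [hae] with z hz
    exact hz
  have hall : ∀ᵐ z ∂ν, ∀ k : ℕ, ∀ᶠ n in Filter.atTop,
      ¬ ((((Finset.range n).filter (fun j => z j ∈ I)).card : ℝ) ≤
        (c₀ - 1/((k:ℝ)+1)) * n) := ae_all_iff.mpr key
  filter_upwards [hall] with z hz
  set u : ℕ → ℝ := fun n => (((Finset.range n).filter (fun j => z j ∈ I)).card : ℝ) / n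
    with hu
  have hu1 : ∀ n, u n ≤ 1 := by
    intro n
    rcases Nat.eq_zero_or_pos n with h | h
    · subst h; simp [hu]
    · rw [hu]; dsimp only
      rw [div_le_one (by exact_mod_cast h)]
      exact_mod_cast (Finset.card_filter_le _ _).trans (le_of_eq (Finset.card_range n))
  have hbdu : Filter.IsBoundedUnder (· ≤ ·) Filter.atTop u :=
    ⟨1, Filter.eventually_map.mpr (Filter.Eventually.of_forall hu1)⟩
  have hcob : Filter.IsCoboundedUnder (· ≥ ·) Filter.atTop u :=
    hbdu.isCoboundedUnder_ge
  have hk : ∀ k : ℕ, c₀ - 1/((k:ℝ)+1) ≤ Filter.atTop.liminf u := by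
    intro k
    apply Filter.le_liminf_of_le hcob
    filter_upwards [hz k, Filter.eventually_ge_atTop 1] with n hn hn1
    have hn0 : (0:ℝ) < n := by exact_mod_cast hn1
    rw [hu]; dsimp only
    rw [le_div_iff₀ hn0]
    push_neg at hn
    exact le_of_lt hn
  have hlim : Filter.Tendsto (fun k : ℕ => c₀ - 1/((k:ℝ)+1)) Filter.atTop (nhds c₀) := by
    have h0 : Filter.Tendsto (fun k : ℕ => 1/((k:ℝ)+1)) Filter.atTop (nhds 0) :=
      tendsto_one_div_add_atTop_nhds_zero_nat
    have := Filter.Tendsto.sub (tendsto_const_nhds (x := c₀) (f := Filter.atTop)) h0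
    simpa using this
  exact le_of_tendsto hlim (Filter.Eventually.of_forall hk)
end
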